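/- arXiv:1011.3505 — 16 statements merged into one kernel-verified Lean document; each statement's English description precedes it below -/
import Mathlib

section
/- Let f be a homogeneous quasimorphism on a group G and let H₁, H₂ be normal subgroups of G such that f vanishes identically on H₁ and on H₂. Then f vanishes identically on the product subgroup H₁H₂. -/
/-- If a homogeneous quasimorphism `f` vanishes on two normal subgroups
`H₁, H₂`, then it vanishes on the product subgroup `H₁H₂`. -/
theorem hqm_vanishes_on_product {G : Type*} [Group G] (f : G → ℝ)
    (hD : ∃ D : ℝ, ∀ g h : G, |f (g * h) - f g - f h| ≤ D)
    (hhom : ∀ (g : G) (n : ℤ), f (g ^ n) = n * f g)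
    (H₁ H₂ : Subgroup G) (hN₁ : H₁.Normal) (hN₂ : H₂.Normal)
    (hf₁ : ∀ h ∈ H₁, f h = 0) (hf₂ : ∀ h ∈ H₂, f h = 0) :
    ∀ h₁ ∈ H₁, ∀ h₂ ∈ H₂, f (h₁ * h₂) = 0 := by
  obtain ⟨D, hDle⟩ := hD
  intro h₁ hm₁ h₂ hm₂
  -- key: (h₁h₂)^n * h₂^{-n} ∈ H₁
  have key : ∀ n : ℕ, (h₁ * h₂) ^ n * (h₂ ^ n)⁻¹ ∈ H₁ := by
    intro n
    induction n with
    | zero => simpa using H₁.one_mem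
    | succ n ih =>
        have h2 : h₂ ^ n * h₁ * (h₂ ^ n)⁻¹ ∈ H₁ := hN₁.conj_mem h₁ hm₁ (h₂ ^ n)
        have := H₁.mul_mem ih h2
        have heq : (h₁ * h₂) ^ n * (h₂ ^ n)⁻¹ * (h₂ ^ n * h₁ * (h₂ ^ n)⁻¹)
            = (h₁ * h₂) ^ (n + 1) * (h₂ ^ (n + 1))⁻¹ := by
          rw [pow_succ, pow_succ]
          group
        rwa [heq] at this
  -- hence |f((h₁h₂)^n)| ≤ D
  have bound : ∀ n : ℕ, |f ((h₁ * h₂) ^ n)| ≤ D := by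
    intro n
    set a := (h₁ * h₂) ^ n * (h₂ ^ n)⁻¹ with ha
    have hfa : f a = 0 := hf₁ a (key n)
    have hfb : f (h₂ ^ n) = 0 := hf₂ _ (H₂.pow_mem hm₂ n)
    have heq : a * h₂ ^ n = (h₁ * h₂) ^ n := by rw [ha, inv_mul_cancel_right]
    have := hDle a (h₂ ^ n)
    rw [heq, hfa, hfb] at this
    simpa using this
  -- so |n * f(h₁h₂)| ≤ D for all n
  have bound' : ∀ n : ℕ, (n : ℝ) * |f (h₁ * h₂)| ≤ D := by
    intro n
    have h1 := hhom (h₁ * h₂) (n : ℤ)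
    rw [zpow_natCast] at h1
    have := bound n
    rw [h1, abs_mul] at this
    simpa using this
  by_contra hne
  have hpos : 0 < |f (h₁ * h₂)| := abs_pos.mpr hne
  obtain ⟨n, hn⟩ := exists_nat_gt (D / |f (h₁ * h₂)|)
  have : D < (n : ℝ) * |f (h₁ * h₂)| := by
    rwa [div_lt_iff₀ hpos] at hn
  exact absurd (bound' n) (not_le.mpr this)
end

section
/- Let G be a group, f a nonzero homogeneous quasimorphism on G, and ≤ a bi-invariant partial order on G with order semigroup G⁺. If there exists C₁ > 0 such that {g ∈ G | f(g) ≥ C₁} ⊆ G⁺, then G⁺ ⊆ {g ∈ G | f(g) ≥ 0}; in particular, ≤ is sandwiched by f with C₂ = 0. -/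
/-- If `f` is a nonzero homogeneous quasimorphism and `G⁺` is the order
semigroup of a bi-invariant partial order on `G` with
`{f ≥ C₁} ⊆ G⁺` for some `C₁ > 0`, then `G⁺ ⊆ {f ≥ 0}`; in particular
the order is sandwiched by `f` with `C₂ = 0`. -/
theorem sandwich_lower_bound {G : Type*} [Group G] (f : G → ℝ)
    (hD : ∃ D : ℝ, ∀ g h : G, |f (g * h) - f g - f h| ≤ D)
    (hhom : ∀ (g : G) (n : ℤ), f (g ^ n) = n * f g)
    (hf0 : f ≠ 0)
    (P : Set G)
    (hone : (1 : G) ∈ P)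
    (hmul : ∀ a ∈ P, ∀ b ∈ P, a * b ∈ P)
    (hconj : ∀ g : G, ∀ a ∈ P, g * a * g⁻¹ ∈ P)
    (hpointed : ∀ a ∈ P, a⁻¹ ∈ P → a = 1)
    (C₁ : ℝ) (hC₁ : 0 < C₁)
    (hsub : {g : G | C₁ ≤ f g} ⊆ P) :
    P ⊆ {g : G | 0 ≤ f g} := by
  intro a ha
  by_contra hneg
  simp only [Set.mem_setOf_eq, not_le] at hneg
  have hf1 : f 1 = 0 := by simpa using hhom 1 0
  have hpos : 0 < -f a := by linarith
  obtain ⟨n, hn⟩ := exists_nat_ge (C₁ / (-f a))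
  set m : ℕ := n + 1 with hm
  have hmn : C₁ ≤ (m : ℝ) * (-f a) := by
    rw [div_le_iff₀ hpos] at hn
    have : (n : ℝ) ≤ (m : ℝ) := by exact_mod_cast Nat.le_succ n
    nlinarith
  have hinv : a ^ (-(m : ℤ)) ∈ P := by
    apply hsub
    show C₁ ≤ f (a ^ (-(m : ℤ)))
    rw [hhom a (-(m : ℤ))]
    have hmc : ((m : ℤ) : ℝ) = (m : ℝ) := by push_cast; ring
    push_cast
    rw [hm] at hmn
    push_cast at hmn
    have hmr : (m : ℝ) = (n : ℝ) + 1 := by simp [hm]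
    rw [hmr]
    linarith
  have hpow : ∀ k : ℕ, a ^ k ∈ P := by
    intro k
    induction k with
    | zero => simpa using hone
    | succ k ih => rw [pow_succ]; exact hmul _ ih _ ha
  have h1 : a ^ m = 1 := by
    apply hpointed _ (hpow m)
    have : (a ^ m)⁻¹ = a ^ (-(m : ℤ)) := by
      rw [zpow_neg, zpow_natCast]
    rw [this]; exact hinv
  have : ((m : ℤ) : ℝ) * f a = 0 := by
    rw [← hhom a (m : ℤ), zpow_natCast, h1, hf1]
  have hm0 : (0 : ℝ) < (m : ℝ) := by positivity
  push_cast at this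
  nlinarith
end

section
/- Let G be a nontrivial group and f an aperiodic homogeneous quasimorphism on G. Then the set G⁺_max := {g ∈ G | f(gh) ≥ f(h) for all h ∈ G} is a conjugation-invariant pointed submonoid of G (hence the order semigroup of a bi-invariant partial order on G), it is sandwiched by f, and every order semigroup of a bi-invariant partial order on G sandwiched by f is contained in G⁺_max; that is, G⁺_max is the unique maximal element, with respect to inclusion, of the collection of order semigroups of bi-invariant partial orders sandwiched by f. -/
section QMAux

variable {G : Type*} [Group G] {f : G → ℝ} {D : ℝ}

lemma qm_f_one (hhom : ∀ (g : G) (n : ℤ), f (g ^ n) = n * f g) : f 1 = 0 := by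
  simpa using hhom 1 0

lemma qm_f_inv (hhom : ∀ (g : G) (n : ℤ), f (g ^ n) = n * f g) (g : G) :
    f g⁻¹ = -f g := by
  simpa using hhom g (-1)

lemma qm_conj_le (hD : ∀ g h : G, |f (g * h) - f g - f h| ≤ D)
    (hhom : ∀ (g : G) (n : ℤ), f (g ^ n) = n * f g) (k x : G) :
    f (k * x * k⁻¹) ≤ f x + 2 * D := by
  have h1 := abs_le.mp (hD (k * x) k⁻¹)
  have h2 := abs_le.mp (hD k x)
  have h3 := qm_f_inv hhom k
  linarith [h1.1, h1.2, h2.1, h2.2]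

lemma qm_conj (hD : ∀ g h : G, |f (g * h) - f g - f h| ≤ D)
    (hhom : ∀ (g : G) (n : ℤ), f (g ^ n) = n * f g) (k g : G) :
    f (k * g * k⁻¹) = f g := by
  have hb : ∀ x : G, |f (k * x * k⁻¹) - f x| ≤ 2 * D := by
    intro x
    have h1 := qm_conj_le hD hhom k x
    have h2 := qm_conj_le hD hhom k⁻¹ (k * x * k⁻¹)
    have e : k⁻¹ * (k * x * k⁻¹) * k⁻¹⁻¹ = x := by group
    rw [e] at h2
    rw [abs_le]
    constructor <;> linarith
  have key : ∀ n : ℕ, (n : ℝ) * |f (k * g * k⁻¹) - f g| ≤ 2 * D := by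
    intro n
    have e1 : f ((k * g * k⁻¹) ^ (n : ℤ)) = (n : ℝ) * f (k * g * k⁻¹) := by
      have := hhom (k * g * k⁻¹) (n : ℤ)
      push_cast at this
      exact this
    have e2 : (k * g * k⁻¹) ^ (n : ℤ) = k * g ^ (n : ℤ) * k⁻¹ := conj_zpow ..
    have e3 : f (g ^ (n : ℤ)) = (n : ℝ) * f g := by
      have := hhom g (n : ℤ)
      push_cast at this
      exact this
    have hx := hb (g ^ (n : ℤ))
    rw [← e2, e1, e3] at hx
    calc (n : ℝ) * |f (k * g * k⁻¹) - f g|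
        = |(n : ℝ) * (f (k * g * k⁻¹) - f g)| := by
          rw [abs_mul, Nat.abs_cast]
      _ = |(n : ℝ) * f (k * g * k⁻¹) - (n : ℝ) * f g| := by rw [mul_sub]
      _ ≤ 2 * D := hx
  by_contra hne
  have hc : 0 < |f (k * g * k⁻¹) - f g| := abs_pos.mpr (sub_ne_zero.mpr hne)
  obtain ⟨n, hn⟩ := exists_nat_gt (2 * D / |f (k * g * k⁻¹) - f g|)
  rw [div_lt_iff₀ hc] at hn
  linarith [key n]

end QMAux

/-- For an aperiodic homogeneous quasimorphism `f` on a nontrivial group `G`,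
the set `G⁺_max = {g | ∀ h, f(gh) ≥ f(h)}` is a conjugation-invariant pointed
submonoid of `G`, is sandwiched by `f`, and contains every order semigroup of
a bi-invariant partial order on `G` sandwiched by `f`. -/
theorem max_order_semigroup {G : Type*} [Group G] [Nontrivial G] (f : G → ℝ)
    (hD : ∃ D : ℝ, ∀ g h : G, |f (g * h) - f g - f h| ≤ D)
    (hhom : ∀ (g : G) (n : ℤ), f (g ^ n) = n * f g)
    (haper : ∀ H : Subgroup G, H.Normal → (∀ h ∈ H, f h = 0) → H = ⊥) :
    (1 : G) ∈ {g : G | ∀ h : G, f h ≤ f (g * h)} ∧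
    (∀ a ∈ {g : G | ∀ h : G, f h ≤ f (g * h)},
      ∀ b ∈ {g : G | ∀ h : G, f h ≤ f (g * h)},
        a * b ∈ {g : G | ∀ h : G, f h ≤ f (g * h)}) ∧
    (∀ k : G, ∀ a ∈ {g : G | ∀ h : G, f h ≤ f (g * h)},
        k * a * k⁻¹ ∈ {g : G | ∀ h : G, f h ≤ f (g * h)}) ∧
    (∀ a ∈ {g : G | ∀ h : G, f h ≤ f (g * h)},
        a⁻¹ ∈ {g : G | ∀ h : G, f h ≤ f (g * h)} → a = 1) ∧
    (∃ C₁ C₂ : ℝ, {g : G | C₁ ≤ f g} ⊆ {g : G | ∀ h : G, f h ≤ f (g * h)} ∧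
        {g : G | ∀ h : G, f h ≤ f (g * h)} ⊆ {g : G | C₂ ≤ f g}) ∧
    (∀ P : Set G, (1 : G) ∈ P →
        (∀ a ∈ P, ∀ b ∈ P, a * b ∈ P) →
        (∀ k : G, ∀ a ∈ P, k * a * k⁻¹ ∈ P) →
        (∀ a ∈ P, a⁻¹ ∈ P → a = 1) →
        (∃ C₁ C₂ : ℝ, {g : G | C₁ ≤ f g} ⊆ P ∧ P ⊆ {g : G | C₂ ≤ f g}) →
        P ⊆ {g : G | ∀ h : G, f h ≤ f (g * h)}) := by
  obtain ⟨D, hD⟩ := hD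
  have hf1 : f 1 = 0 := qm_f_one hhom
  have hconj : ∀ k g : G, f (k * g * k⁻¹) = f g := qm_conj hD hhom
  refine ⟨?_, ?_, ?_, ?_, ?_, ?_⟩
  · -- 1 ∈ S
    intro h
    rw [one_mul]
  · -- closed under multiplication
    intro a ha b hb h
    have h1 := ha (b * h)
    rw [← mul_assoc] at h1
    exact le_trans (hb h) h1
  · -- conjugation invariant
    intro k a ha h
    have e : k * a * k⁻¹ * h = k * (a * (k⁻¹ * h * k)) * k⁻¹ := by group
    rw [e, hconj]
    have h2 : f (k⁻¹ * h * k) ≤ f (a * (k⁻¹ * h * k)) := ha _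
    have h3 : f (k⁻¹ * h * k) = f h := by
      have := hconj k⁻¹ h
      simpa using this
    linarith
  · -- pointed
    intro a ha hinv
    let H : Subgroup G :=
      { carrier := {x : G | ∀ h : G, f (x * h) = f h}
        one_mem' := by intro h; rw [one_mul]
        mul_mem' := by
          intro x y hx hy h
          rw [mul_assoc, hx, hy]
        inv_mem' := by
          intro x hx h
          have h1 := hx (x⁻¹ * h)
          rw [mul_inv_cancel_left] at h1
          exact h1.symm }
    have hN : H.Normal := by
      constructor
      intro x hx k h
      have e : k * x * k⁻¹ * h = k * (x * (k⁻¹ * h * k)) * k⁻¹ := by group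
      show f (k * x * k⁻¹ * h) = f h
      rw [e, hconj, hx]
      have := hconj k⁻¹ h
      simpa using this
    have hHbot : H = ⊥ := by
      refine haper H hN ?_
      intro x hx
      have h1 : f (x * 1) = f 1 := hx 1
      rw [mul_one, hf1] at h1
      exact h1
    have haH : a ∈ H := by
      show ∀ h : G, f (a * h) = f h
      intro h
      have h1 := ha h
      have h2 := hinv (a * h)
      rw [inv_mul_cancel_left] at h2
      linarith
    rw [hHbot] at haH
    exact Subgroup.mem_bot.mp haH
  · -- sandwiched
    refine ⟨D, 0, ?_, ?_⟩
    · intro g hg h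
      have h1 := (abs_le.mp (hD g h)).1
      have hg' : D ≤ f g := hg
      linarith
    · intro g hg
      have h1 := hg 1
      rw [mul_one, hf1] at h1
      exact h1
  · -- maximality
    intro P hP1 hPmul hPconj _hPpt hPsand a haP h
    obtain ⟨C₁, C₂, _hC1, hC2⟩ := hPsand
    by_contra hlt
    push_neg at hlt
    have key : ∀ n : ℕ, (a * h) ^ n * (h ^ n)⁻¹ ∈ P := by
      intro n
      induction n with
      | zero => simpa using hP1
      | succ n ih =>
        have e : (a * h) ^ (n + 1) * (h ^ (n + 1))⁻¹ =
            ((a * h) ^ n * (h ^ n)⁻¹) * (h ^ n * a * (h ^ n)⁻¹) := by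
          rw [pow_succ, pow_succ]
          group
        rw [e]
        exact hPmul _ ih _ (hPconj (h ^ n) a haP)
    have hfpow : ∀ n : ℕ,
        f ((a * h) ^ n * (h ^ n)⁻¹) ≤ (n : ℝ) * f (a * h) - (n : ℝ) * f h + D := by
      intro n
      have h1 := (abs_le.mp (hD ((a * h) ^ n) ((h ^ n)⁻¹))).2
      have e1 : f ((a * h) ^ n) = (n : ℝ) * f (a * h) := by
        have := hhom (a * h) (n : ℤ)
        rw [zpow_natCast] at this
        push_cast at this
        exact this
      have e2 : f ((h ^ n)⁻¹) = -((n : ℝ) * f h) := by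
        have := hhom h (-(n : ℤ))
        rw [zpow_neg, zpow_natCast] at this
        push_cast at this
        linarith
      rw [e1, e2] at h1
      linarith
    have hε : 0 < f h - f (a * h) := by linarith
    obtain ⟨n, hn⟩ := exists_nat_gt ((D - C₂) / (f h - f (a * h)))
    have h1 : C₂ ≤ f ((a * h) ^ n * (h ^ n)⁻¹) := hC2 (key n)
    have h2 := hfpow n
    rw [div_lt_iff₀ hε] at hn
    nlinarith
end

section
/- Let G be a nontrivial group and f an aperiodic homogeneous quasimorphism on G, and let G⁺_max := {g ∈ G | f(gh) ≥ f(h) for all h ∈ G}. Then G⁺_max is a maximal pointed conjugation-invariant subsemigroup of G: there is no conjugation-invariant subsemigroup S of G with S ∩ S⁻¹ ⊆ {e} and G⁺_max ⊊ S ⊊ G. -/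
/-- For an aperiodic homogeneous quasimorphism `f` on a nontrivial group `G`,
`G⁺_max = {g | ∀ h, f(gh) ≥ f(h)}` is a maximal pointed conjugation-invariant
subsemigroup of `G`: there is no conjugation-invariant subsemigroup `S` with
`S ∩ S⁻¹ ⊆ {1}` and `G⁺_max ⊊ S ⊊ G`. -/
theorem max_order_semigroup_maximal_pointed {G : Type*} [Group G] [Nontrivial G]
    (f : G → ℝ)
    (hD : ∃ D : ℝ, ∀ g h : G, |f (g * h) - f g - f h| ≤ D)
    (hhom : ∀ (g : G) (n : ℤ), f (g ^ n) = n * f g)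
    (haper : ∀ H : Subgroup G, H.Normal → (∀ h ∈ H, f h = 0) → H = ⊥) :
    ¬ ∃ S : Set G,
        (∀ a ∈ S, ∀ b ∈ S, a * b ∈ S) ∧
        (∀ g : G, ∀ a ∈ S, g * a * g⁻¹ ∈ S) ∧
        (S ∩ S⁻¹ ⊆ {1}) ∧
        {g : G | ∀ h : G, f h ≤ f (g * h)} ⊂ S ∧
        S ⊂ Set.univ := by
  rintro ⟨S, hmul, hconj, hpt, hsub, hproper⟩
  obtain ⟨D, hDle⟩ := hD
  have hadd_le : ∀ g h : G, f (g * h) ≤ f g + f h + D := by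
    intro g h
    have := abs_le.mp (hDle g h)
    linarith [this.2]
  have hadd_ge : ∀ g h : G, f g + f h - D ≤ f (g * h) := by
    intro g h
    have := abs_le.mp (hDle g h)
    linarith [this.1]
  have hinv : ∀ g : G, f g⁻¹ = - f g := by
    intro g
    have := hhom g (-1)
    simpa using this
  have hpow : ∀ (g : G) (n : ℕ), f (g ^ n) = n * f g := by
    intro g n
    have := hhom g (n : ℤ)
    simpa using this
  have hGsub : {g : G | ∀ h : G, f h ≤ f (g * h)} ⊆ S := hsub.subset
  obtain ⟨t, -, htS⟩ := Set.exists_of_ssubset hproper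
  -- f is bounded below on S
  have hlow : ∀ a ∈ S, f t - 2 * D < f a := by
    intro a haS
    have h1 : a⁻¹ * t ∉ S := by
      intro hmem
      exact htS (by simpa [mul_assoc] using hmul a haS _ hmem)
    have h2 : f (a⁻¹ * t) < D := by
      by_contra hc
      push_neg at hc
      apply h1
      apply hGsub
      intro h
      calc f h ≤ f (a⁻¹ * t) + f h - D := by linarith
        _ ≤ f (a⁻¹ * t * h) := hadd_ge _ _
    have h3 := hadd_ge a⁻¹ t
    rw [hinv] at h3
    linarith
  -- pick s ∈ S \ G⁺
  obtain ⟨s, hsS, hns⟩ := Set.exists_of_ssubset hsub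
  simp only [Set.mem_setOf_eq] at hns
  push_neg at hns
  obtain ⟨h, hh⟩ := hns
  -- the elements (s*h)^(n+1) * (h^(n+1))⁻¹ lie in S
  have hc : ∀ n : ℕ, (s * h) ^ (n + 1) * ((h : G) ^ (n + 1))⁻¹ ∈ S := by
    intro n
    induction n with
    | zero => simpa using hsS
    | succ k ih =>
        have heq : (s * h) ^ (k + 1 + 1) * ((h : G) ^ (k + 1 + 1))⁻¹ =
            ((s * h) ^ (k + 1) * ((h : G) ^ (k + 1))⁻¹) *
              ((h : G) ^ (k + 1) * s * ((h : G) ^ (k + 1))⁻¹) := by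
          simp [pow_succ, mul_inv_rev, mul_assoc]
        rw [heq]
        exact hmul _ ih _ (hconj _ s hsS)
  -- and their f-values go to -∞
  have hb : ∀ n : ℕ, f ((s * h) ^ n * ((h : G) ^ n)⁻¹) ≤ (n : ℝ) * (f (s * h) - f h) + D := by
    intro n
    have h1 := hadd_le ((s * h) ^ n) (((h : G) ^ n)⁻¹)
    rw [hinv, hpow, hpow] at h1
    linarith
  obtain ⟨n, hn⟩ := exists_nat_gt ((3 * D - f t) / (f h - f (s * h)))
  have hδ : 0 < f h - f (s * h) := by linarith
  have hn' : 3 * D - f t < (n : ℝ) * (f h - f (s * h)) := (div_lt_iff₀ hδ).mp hn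
  have h1 := hlow _ (hc n)
  have h2 := hb (n + 1)
  have h3 : ((n : ℝ)) * (f h - f (s * h)) ≤ ((n + 1 : ℕ) : ℝ) * (f h - f (s * h)) := by
    push_cast
    nlinarith
  nlinarith [h1, h2, h3]
end

section
/- Let G be a connected topological group, f a nonzero continuous homogeneous quasimorphism on G, and let G⁺ be the order semigroup of a bi-invariant partial order on G sandwiched by f, with dominant set G⁺⁺. Then the topological interior of G⁺ is contained in G⁺⁺. -/
/-- Key product lemma: if `h * v ∈ P` for all elements `v` of a list `l`,
then `h ^ l.length * l.prod ∈ P`. -/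
lemma pow_mul_list_prod_mem {G : Type*} [Group G] (P : Set G)
    (hone : (1 : G) ∈ P)
    (hmul : ∀ a ∈ P, ∀ b ∈ P, a * b ∈ P)
    (hconj : ∀ g : G, ∀ a ∈ P, g * a * g⁻¹ ∈ P)
    (h : G) : ∀ l : List G, (∀ v ∈ l, h * v ∈ P) → h ^ l.length * l.prod ∈ P := by
  intro l
  induction l with
  | nil => intro _; simpa using hone
  | cons v t ih =>
    intro hv
    have h1 : h ^ t.length * (h * v) * (h ^ t.length)⁻¹ ∈ P :=
      hconj _ _ (hv v (List.mem_cons_self (a := v) (l := t)))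
    have h2 : h ^ t.length * t.prod ∈ P := ih fun w hw => hv w (List.mem_cons_of_mem _ hw)
    have := hmul _ h1 _ h2
    have heq : h ^ t.length * (h * v) * (h ^ t.length)⁻¹ * (h ^ t.length * t.prod)
        = h ^ (v :: t).length * (v :: t).prod := by
      simp [List.length_cons, List.prod_cons, pow_succ]
      group
    rwa [heq] at this

/-- Let `G` be a connected topological group, `f` a nonzero continuous
homogeneous quasimorphism and `G⁺` the order semigroup of a bi-invariant
partial order sandwiched by `f`. Then `Int(G⁺)` is contained in the
dominant set `G⁺⁺` of `G⁺`. -/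
theorem interior_subset_dominants {G : Type*} [Group G] [TopologicalSpace G]
    [IsTopologicalGroup G] [ConnectedSpace G]
    (f : G → ℝ) (hcont : Continuous f)
    (hD : ∃ D : ℝ, ∀ g h : G, |f (g * h) - f g - f h| ≤ D)
    (hhom : ∀ (g : G) (n : ℤ), f (g ^ n) = n * f g)
    (hf0 : f ≠ 0)
    (P : Set G)
    (hone : (1 : G) ∈ P)
    (hmul : ∀ a ∈ P, ∀ b ∈ P, a * b ∈ P)
    (hconj : ∀ g : G, ∀ a ∈ P, g * a * g⁻¹ ∈ P)
    (hpointed : ∀ a ∈ P, a⁻¹ ∈ P → a = 1)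
    (hsandwich : ∃ C₁ C₂ : ℝ, {g : G | C₁ ≤ f g} ⊆ P ∧ P ⊆ {g : G | C₂ ≤ f g}) :
    interior P ⊆ {h : G | h ∈ P ∧ h ≠ 1 ∧ ∀ g : G, ∃ n : ℕ, h ^ n * g⁻¹ ∈ P} := by
  intro h hh
  -- W is an open neighborhood of 1 with h * W ⊆ P
  set W : Set G := (fun v => h * v) ⁻¹' interior P with hW
  have hWopen : IsOpen W := isOpen_interior.preimage (continuous_mul_left h)
  have hW1 : (1 : G) ∈ W := by simpa [hW] using hh
  have hWP : ∀ v ∈ W, h * v ∈ P := fun v hv => interior_subset hv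
  -- the subgroup generated by W is all of G
  have hgen : ∀ g : G, g ∈ Subgroup.closure W := by
    have hopen : IsOpen ((Subgroup.closure W : Subgroup G) : Set G) := by
      apply Subgroup.isOpen_of_mem_nhds
      exact Filter.mem_of_superset (hWopen.mem_nhds hW1) Subgroup.subset_closure
    have hclopen : IsClopen ((Subgroup.closure W : Subgroup G) : Set G) :=
      (OpenSubgroup.mk (Subgroup.closure W) hopen).isClopen
    have := hclopen.eq_univ (α := G) ⟨1, Subgroup.one_mem _⟩
    intro g
    have : g ∈ ((Subgroup.closure W : Subgroup G) : Set G) := this ▸ Set.mem_univ g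
    exact this
  refine ⟨interior_subset hh, ?_, ?_⟩
  · -- h ≠ 1
    rintro rfl
    -- then a symmetric neighborhood of 1 is inside P, so {1} is open, so G is trivial
    have hsub : W ∩ W⁻¹ ⊆ {1} := by
      rintro v ⟨hv1, hv2⟩
      have hvP : v ∈ P := by simpa using hWP v hv1
      have hvP' : v⁻¹ ∈ P := by simpa using hWP v⁻¹ hv2
      exact hpointed v hvP hvP'
    have hVopen : IsOpen (W ∩ W⁻¹) := hWopen.inter (hWopen.preimage continuous_inv)
    have hV1 : (1 : G) ∈ W ∩ W⁻¹ := ⟨hW1, by simpa using hW1⟩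
    have hVeq : W ∩ W⁻¹ = {1} :=
      Set.Subset.antisymm hsub (by rintro v rfl; exact hV1)
    have h1open : IsOpen ({1} : Set G) := hVeq ▸ hVopen
    -- the trivial subgroup is open, hence all of G
    have hbot : ∀ g : G, g ∈ (⊥ : Subgroup G) := by
      have hopen : IsOpen ((⊥ : Subgroup G) : Set G) := by
        simpa [Subgroup.coe_bot] using h1open
      have hclopen : IsClopen ((⊥ : Subgroup G) : Set G) :=
        (OpenSubgroup.mk ⊥ hopen).isClopen
      have := hclopen.eq_univ (α := G) ⟨1, Subgroup.one_mem _⟩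
      intro g
      have : g ∈ ((⊥ : Subgroup G) : Set G) := this ▸ Set.mem_univ g
      exact this
    -- G is trivial so f = 0, contradiction
    apply hf0
    funext g
    have hg1 : g = 1 := by simpa using hbot g
    have : f ((1 : G) ^ (0 : ℤ)) = (0 : ℤ) * f 1 := hhom 1 0
    simpa [hg1] using this
  · -- dominance
    intro g
    set V : Set G := W ∩ W⁻¹ with hV
    have hVW : V ⊆ W := Set.inter_subset_left
    have hVopen : IsOpen V := hWopen.inter (hWopen.preimage continuous_inv)
    have hV1 : (1 : G) ∈ V := ⟨hW1, by simpa using hW1⟩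
    have hgenV : g⁻¹ ∈ Subgroup.closure V := by
      have hopen : IsOpen ((Subgroup.closure V : Subgroup G) : Set G) := by
        apply Subgroup.isOpen_of_mem_nhds
        exact Filter.mem_of_superset (hVopen.mem_nhds hV1) Subgroup.subset_closure
      have hclopen : IsClopen ((Subgroup.closure V : Subgroup G) : Set G) :=
        (OpenSubgroup.mk (Subgroup.closure V) hopen).isClopen
      have huniv := hclopen.eq_univ (α := G) ⟨1, Subgroup.one_mem _⟩
      have : g⁻¹ ∈ ((Subgroup.closure V : Subgroup G) : Set G) := huniv ▸ Set.mem_univ _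
      exact this
    have hg' : g⁻¹ ∈ Submonoid.closure (V ∪ V⁻¹) := by
      rwa [← Subgroup.closure_toSubmonoid, Subgroup.mem_toSubmonoid]
    obtain ⟨l, hl, hprod⟩ := Submonoid.exists_list_of_mem_closure hg'
    refine ⟨l.length, ?_⟩
    rw [← hprod]
    apply pow_mul_list_prod_mem P hone hmul hconj
    intro v hv
    apply hWP
    rcases hl v hv with hvV | hvV
    · exact hVW hvV
    · have : v⁻¹ ∈ V := hvV
      have : v⁻¹ ∈ W⁻¹ := this.2
      simpa using this
end

section
/- Let G be a connected topological group, f a nonzero continuous homogeneous quasimorphism on G, and let G⁺ be the order semigroup of a bi-invariant partial order on G sandwiched by f. Then there exists a constant C > 0 such that every g ∈ G with f(g) > C lies in the topological interior of G⁺. -/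
/-- Let `G` be a connected topological group, `f` a nonzero continuous
homogeneous quasimorphism and `G⁺` the order semigroup of a bi-invariant
partial order sandwiched by `f`. Then there is `C > 0` such that
`f(g) > C` implies `g ∈ Int(G⁺)`. -/
theorem large_f_in_interior {G : Type*} [Group G] [TopologicalSpace G]
    [IsTopologicalGroup G] [ConnectedSpace G]
    (f : G → ℝ) (hcont : Continuous f)
    (hD : ∃ D : ℝ, ∀ g h : G, |f (g * h) - f g - f h| ≤ D)
    (hhom : ∀ (g : G) (n : ℤ), f (g ^ n) = n * f g)
    (hf0 : f ≠ 0)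
    (P : Set G)
    (hone : (1 : G) ∈ P)
    (hmul : ∀ a ∈ P, ∀ b ∈ P, a * b ∈ P)
    (hconj : ∀ g : G, ∀ a ∈ P, g * a * g⁻¹ ∈ P)
    (hpointed : ∀ a ∈ P, a⁻¹ ∈ P → a = 1)
    (hsandwich : ∃ C₁ C₂ : ℝ, {g : G | C₁ ≤ f g} ⊆ P ∧ P ⊆ {g : G | C₂ ≤ f g}) :
    ∃ C : ℝ, 0 < C ∧ ∀ g : G, C < f g → g ∈ interior P := by
  obtain ⟨C₁, C₂, hP1, hP2⟩ := hsandwich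
  refine ⟨max C₁ 0 + 1, by positivity, fun g hg => ?_⟩
  have hopen : IsOpen {h : G | C₁ < f h} := isOpen_lt continuous_const hcont
  have hsub : {h : G | C₁ < f h} ⊆ P := fun h hh => hP1 (show C₁ ≤ f h from le_of_lt hh)
  exact interior_maximal hsub hopen
    (lt_of_le_of_lt (le_trans (le_max_left C₁ 0) (by linarith)) hg)
end

section
/- Let G be a group and f a nonzero homogeneous quasimorphism on G. A subset S ⊆ G is the dominant set of the order semigroup of some bi-invariant partial order on G sandwiched by f if and only if the following three conditions hold: (D1) S is a conjugation-invariant subsemigroup of G; (D2) f(g) > 0 for every g ∈ S; (D3) there exists C > 0 such that every g ∈ G with f(g) ≥ C belongs to S. -/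
/-- Characterization of dominant sets: `S ⊆ G` is the dominant set of the
order semigroup of some bi-invariant partial order on `G` sandwiched by a
nonzero homogeneous quasimorphism `f` iff (D1) `S` is a conjugation-invariant
subsemigroup, (D2) `f > 0` on `S`, and (D3) `{f ≥ C} ⊆ S` for some `C > 0`. -/
theorem dominant_set_characterization {G : Type*} [Group G] (f : G → ℝ)
    (hD : ∃ D : ℝ, ∀ g h : G, |f (g * h) - f g - f h| ≤ D)
    (hhom : ∀ (g : G) (n : ℤ), f (g ^ n) = n * f g)
    (hf0 : f ≠ 0)
    (S : Set G) :
    (∃ P : Set G,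
        (1 : G) ∈ P ∧
        (∀ a ∈ P, ∀ b ∈ P, a * b ∈ P) ∧
        (∀ g : G, ∀ a ∈ P, g * a * g⁻¹ ∈ P) ∧
        (∀ a ∈ P, a⁻¹ ∈ P → a = 1) ∧
        (∃ C₁ C₂ : ℝ, {g : G | C₁ ≤ f g} ⊆ P ∧ P ⊆ {g : G | C₂ ≤ f g}) ∧
        {h : G | h ∈ P ∧ h ≠ 1 ∧ ∀ g : G, ∃ n : ℕ, h ^ n * g⁻¹ ∈ P} = S) ↔
    ((∀ a ∈ S, ∀ b ∈ S, a * b ∈ S) ∧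
        (∀ g : G, ∀ a ∈ S, g * a * g⁻¹ ∈ S) ∧
        (∀ g ∈ S, 0 < f g) ∧
        (∃ C : ℝ, 0 < C ∧ ∀ g : G, C ≤ f g → g ∈ S)) := by
  obtain ⟨D, hDle⟩ := hD
  have hD0 : 0 ≤ D := le_trans (abs_nonneg _) (hDle 1 1)
  have hf1 : f 1 = 0 := by simpa using hhom 1 0
  have hfinv : ∀ g : G, f g⁻¹ = - f g := by
    intro g; have := hhom g (-1); simpa using this
  have hfpow : ∀ (g : G) (n : ℕ), f (g ^ n) = n * f g := by
    intro g n; have := hhom g (n : ℤ); simpa using this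
  have hupper : ∀ a b : G, f (a * b) ≤ f a + f b + D := by
    intro a b; have := abs_le.mp (hDle a b); linarith [this.2]
  have hlower : ∀ a b : G, f a + f b - D ≤ f (a * b) := by
    intro a b; have := abs_le.mp (hDle a b); linarith [this.1]
  have hlarge : ∀ M : ℝ, ∃ g : G, M ≤ f g := by
    obtain ⟨g₀, hg₀⟩ : ∃ g : G, f g ≠ 0 := by
      by_contra h; push_neg at h
      exact hf0 (funext fun g => h g)
    have hex : ∃ a : G, 0 < f a := by
      rcases lt_or_gt_of_ne hg₀ with h | h
      · exact ⟨g₀⁻¹, by rw [hfinv]; linarith⟩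
      · exact ⟨g₀, h⟩
    obtain ⟨a, ha⟩ := hex
    intro M
    obtain ⟨n, hn⟩ := exists_nat_ge (M / f a)
    refine ⟨a ^ n, ?_⟩
    rw [hfpow]
    rwa [div_le_iff₀ ha] at hn
  constructor
  · rintro ⟨P, h1P, hmul, hconj, _hpoint, ⟨C₁, C₂, hC₁, hC₂⟩, hSeq⟩
    have dompos : ∀ h : G, (∀ g : G, ∃ n : ℕ, h ^ n * g⁻¹ ∈ P) → 0 < f h := by
      intro h hdom
      obtain ⟨g, hg⟩ := hlarge (|C₂| + D + 1)
      obtain ⟨n, hn⟩ := hdom g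
      have h1 : C₂ ≤ f (h ^ n * g⁻¹) := hC₂ hn
      have h2 := hupper (h ^ n) g⁻¹
      rw [hfpow, hfinv] at h2
      have h3 : 0 < (n : ℝ) * f h := by
        have := neg_abs_le C₂
        linarith
      by_contra hle
      push_neg at hle
      have : (n : ℝ) * f h ≤ 0 := mul_nonpos_of_nonneg_of_nonpos n.cast_nonneg hle
      linarith
    have key : ∀ a ∈ P, ∀ b ∈ P, ∀ n : ℕ, (a * b) ^ n * (a ^ n)⁻¹ ∈ P := by
      intro a ha b hb n
      induction n with
      | zero => simpa using h1P
      | succ n ih =>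
        have h2 : a ^ n * (a * b * a⁻¹) * (a ^ n)⁻¹ ∈ P :=
          hconj (a ^ n) _ (hconj a b hb)
        have h3 := hmul _ ih _ h2
        have heq : ((a * b) ^ n * (a ^ n)⁻¹) * (a ^ n * (a * b * a⁻¹) * (a ^ n)⁻¹)
            = (a * b) ^ (n + 1) * (a ^ (n + 1))⁻¹ := by
          rw [pow_succ, pow_succ]; group
        rwa [heq] at h3
    refine ⟨?_, ?_, ?_, ?_⟩
    · -- semigroup
      intro a ha b hb
      rw [← hSeq] at ha hb ⊢
      obtain ⟨haP, hane, hadom⟩ := ha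
      obtain ⟨hbP, hbne, hbdom⟩ := hb
      refine ⟨hmul a haP b hbP, ?_, ?_⟩
      · intro hab
        have hfa := dompos a hadom
        have hfb := dompos b hbdom
        have : b = a⁻¹ := eq_inv_of_mul_eq_one_right hab
        rw [this, hfinv] at hfb
        linarith
      · intro g
        obtain ⟨n, hn⟩ := hadom g
        refine ⟨n, ?_⟩
        have h3 := hmul _ (key a haP b hbP n) _ hn
        rwa [show ((a * b) ^ n * (a ^ n)⁻¹) * (a ^ n * g⁻¹) = (a * b) ^ n * g⁻¹ by group] at h3
    · -- conjugation invariance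
      intro g a ha
      rw [← hSeq] at ha ⊢
      obtain ⟨haP, hane, hadom⟩ := ha
      refine ⟨hconj g a haP, ?_, ?_⟩
      · intro h
        apply hane
        have : a = g⁻¹ * (g * a * g⁻¹) * g := by group
        rw [this, h]; group
      · intro k
        obtain ⟨n, hn⟩ := hadom (g⁻¹ * k * g)
        refine ⟨n, ?_⟩
        have h3 := hconj g _ hn
        rwa [show g * ((a ^ n * (g⁻¹ * k * g)⁻¹)) * g⁻¹ = (g * a * g⁻¹) ^ n * k⁻¹ by
          rw [conj_pow]; group] at h3
    · -- positivity
      intro h hh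
      rw [← hSeq] at hh
      exact dompos h hh.2.2
    · -- D3
      refine ⟨max C₁ 1, lt_of_lt_of_le one_pos (le_max_right _ _), ?_⟩
      intro g hg
      rw [← hSeq]
      have hgC₁ : C₁ ≤ f g := le_trans (le_max_left _ _) hg
      have hg1 : (1 : ℝ) ≤ f g := le_trans (le_max_right _ _) hg
      refine ⟨hC₁ hgC₁, ?_, ?_⟩
      · intro h
        rw [h, hf1] at hg1
        linarith
      · intro k
        obtain ⟨n, hn⟩ := exists_nat_ge (C₁ + f k + D)
        refine ⟨n, hC₁ ?_⟩
        have h2 := hlower (g ^ n) k⁻¹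
        rw [hfpow, hfinv] at h2
        have h4 : (n : ℝ) ≤ (n : ℝ) * f g := by nlinarith [Nat.cast_nonneg (α := ℝ) n]
        simp only [Set.mem_setOf_eq]
        linarith
  · rintro ⟨hSmul, hSconj, hSpos, C, hCpos, hCS⟩
    refine ⟨S ∪ {1}, Or.inr rfl, ?_, ?_, ?_, ⟨C, 0, ?_, ?_⟩, ?_⟩
    · rintro a (ha | rfl) b (hb | rfl)
      · exact Or.inl (hSmul a ha b hb)
      · simp only [mul_one]; exact Or.inl ha
      · simp only [one_mul]; exact Or.inl hb
      · simp
    · rintro g a (ha | rfl)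
      · exact Or.inl (hSconj g a ha)
      · simp
    · rintro a (ha | rfl) hinv
      · rcases hinv with hinv | hinv
        · exfalso
          have h1 := hSpos a ha
          have h2 := hSpos a⁻¹ hinv
          rw [hfinv] at h2
          linarith
        · simpa [inv_eq_one] using hinv
      · rfl
    · intro g hg
      exact Or.inl (hCS g hg)
    · rintro g (hg | rfl)
      · exact le_of_lt (hSpos g hg)
      · simp [hf1]
    · ext h
      simp only [Set.mem_setOf_eq]
      constructor
      · rintro ⟨hP | rfl, hne, _⟩
        · exact hP
        · exact absurd rfl hne
      · intro hS
        have hfh := hSpos h hS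
        refine ⟨Or.inl hS, ?_, ?_⟩
        · intro h1
          rw [h1, hf1] at hfh
          exact lt_irrefl _ hfh
        · intro g
          obtain ⟨n, hn⟩ := exists_nat_ge ((C + f g + D) / f h)
          refine ⟨n, Or.inl (hCS _ ?_)⟩
          rw [div_le_iff₀ hfh] at hn
          have h2 := hlower (h ^ n) g⁻¹
          rw [hfpow, hfinv] at h2
          linarith
end

section
/- Let G be a nontrivial group and f an aperiodic homogeneous quasimorphism on G. Set G⁺_max := {g ∈ G | f(gh) ≥ f(h) for all h ∈ G} and G⁺⁺_max := {g ∈ G⁺_max | f(g) > 0}. Then G⁺_max = {g ∈ G | g·G⁺⁺_max ⊆ G⁺⁺_max}, i.e. g ∈ G⁺_max if and only if gx ∈ G⁺⁺_max for every x ∈ G⁺⁺_max. -/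
private lemma maxdom_nonpos_of_bdd (x C : ℝ) (h : ∀ n : ℕ, (n : ℝ) * x ≤ C) : x ≤ 0 := by
  by_contra hx
  push_neg at hx
  obtain ⟨n, hn⟩ := exists_nat_gt (C / x)
  have h1 := h n
  rw [div_lt_iff₀ hx] at hn
  linarith

namespace MaxDomAux

variable {G : Type*} [Group G]

/-- `G⁺_max` as a predicate. -/
def IsMax (f : G → ℝ) (z : G) : Prop := ∀ h, f h ≤ f (z * h)

/-- `G⁺⁺_max` as a predicate. -/
def IsPos (f : G → ℝ) (z : G) : Prop := IsMax f z ∧ 0 < f z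

/-- the right-hand side set, as a predicate. -/
def Stab (f : G → ℝ) (g : G) : Prop := ∀ x, IsPos f x → IsPos f (g * x)

section

variable {f : G → ℝ} {D : ℝ}
variable (hD : ∀ g h : G, |f (g * h) - f g - f h| ≤ D)
variable (hhom : ∀ (g : G) (n : ℤ), f (g ^ n) = n * f g)

include hhom in
lemma f_one : f 1 = 0 := by simpa using hhom 1 0

include hhom in
lemma f_inv (g : G) : f g⁻¹ = -f g := by simpa using hhom g (-1)

include hhom in
lemma f_npow (g : G) (n : ℕ) : f (g ^ n) = n * f g := by
  simpa using hhom g n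

include hD hhom in
lemma f_conj (a b : G) : f (a * b * a⁻¹) = f b := by
  have key : ∀ n : ℕ, (n : ℝ) * |f (a * b * a⁻¹) - f b| ≤ 2 * D := by
    intro n
    have e1 : (a * b * a⁻¹) ^ n = a * (b ^ n * a⁻¹) := by
      rw [conj_pow, mul_assoc]
    have h1 := abs_le.mp (hD a (b ^ n * a⁻¹))
    have h2 := abs_le.mp (hD (b ^ n) a⁻¹)
    have h3 : f ((a * b * a⁻¹) ^ n) = n * f (a * b * a⁻¹) := f_npow hhom _ n
    rw [e1] at h3
    have h4 : f (b ^ n) = n * f b := f_npow hhom b n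
    have h5 : f a⁻¹ = -f a := f_inv hhom a
    have e2 : (n : ℝ) * |f (a * b * a⁻¹) - f b| = |(n : ℝ) * f (a * b * a⁻¹) - n * f b| := by
      rw [← mul_sub, abs_mul, Nat.abs_cast]
    rw [e2, abs_le]
    constructor <;> linarith [h1.1, h1.2, h2.1, h2.2]
  have h0 : |f (a * b * a⁻¹) - f b| ≤ 0 := by
    rcases le_or_gt D 0 with hDle | hDpos
    · have := key 1
      have := abs_nonneg (f (a * b * a⁻¹) - f b)
      linarith
    · have : ∀ n : ℕ, (n : ℝ) * |f (a * b * a⁻¹) - f b| ≤ 2 * D := key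
      exact maxdom_nonpos_of_bdd _ _ this
  have := abs_eq_zero.mp (le_antisymm h0 (abs_nonneg _))
  linarith

include hD in
lemma big_isMax {z : G} (hz : D ≤ f z) : IsMax f z := by
  intro h
  have h1 := (abs_le.mp (hD z h)).1
  linarith

include hD hhom in
lemma isPos_conj {x : G} (hx : IsPos f x) (c : G) : IsPos f (c * x * c⁻¹) := by
  constructor
  · intro h
    have e : c * x * c⁻¹ * h = c * (x * (c⁻¹ * h * c)) * c⁻¹ := by group
    rw [e, f_conj hD hhom]
    have e2 : f (c⁻¹ * h * c) = f h := by
      have := f_conj hD hhom c⁻¹ h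
      rwa [inv_inv] at this
    calc f h = f (c⁻¹ * h * c) := e2.symm
      _ ≤ f (x * (c⁻¹ * h * c)) := hx.1 _
  · rw [f_conj hD hhom]
    exact hx.2

lemma stab_one : Stab f 1 := by
  intro x hx
  rwa [one_mul]

lemma stab_mul {a b : G} (ha : Stab f a) (hb : Stab f b) : Stab f (a * b) := by
  intro x hx
  have := ha (b * x) (hb x hx)
  rwa [← mul_assoc] at this

include hD hhom in
lemma stab_conj {a : G} (ha : Stab f a) (c : G) : Stab f (c * a * c⁻¹) := by
  intro x hx
  have hx' : IsPos f (c⁻¹ * x * c) := by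
    have := isPos_conj hD hhom hx c⁻¹
    rwa [inv_inv] at this
  have h2 : IsPos f (c * (a * (c⁻¹ * x * c)) * c⁻¹) := isPos_conj hD hhom (ha _ hx') c
  have e : c * a * c⁻¹ * x = c * (a * (c⁻¹ * x * c)) * c⁻¹ := by group
  rwa [e]

lemma stab_pow {a : G} (ha : Stab f a) (m : ℕ) : Stab f (a ^ m) := by
  induction m with
  | zero => simpa [pow_zero] using stab_one (f := f)
  | succ k ih => rw [pow_succ]; exact stab_mul ih ha

include hD hhom in
lemma stab_f_nonneg {a y : G} (hy : IsPos f y) (ha : Stab f a) : 0 ≤ f a := by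
  have hkey : ∀ m : ℕ, (m : ℝ) * (-f a) ≤ f y + D := by
    intro m
    have h1 := (stab_pow ha m y hy).2
    have h2 := (abs_le.mp (hD (a ^ m) y)).2
    have h3 := f_npow hhom a m
    have e : (m : ℝ) * (-f a) = -((m : ℝ) * f a) := by ring
    linarith
  have := maxdom_nonpos_of_bdd (-f a) (f y + D) hkey
  linarith

end

end MaxDomAux

/-- For an aperiodic homogeneous quasimorphism `f` on a nontrivial group `G`,
with `G⁺_max = {g | ∀ h, f(gh) ≥ f(h)}` and `G⁺⁺_max = {g ∈ G⁺_max | f(g) > 0}`,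
we have `G⁺_max = {g | g·G⁺⁺_max ⊆ G⁺⁺_max}`. -/
theorem max_from_dominants {G : Type*} [Group G] [Nontrivial G] (f : G → ℝ)
    (hD : ∃ D : ℝ, ∀ g h : G, |f (g * h) - f g - f h| ≤ D)
    (hhom : ∀ (g : G) (n : ℤ), f (g ^ n) = n * f g)
    (haper : ∀ H : Subgroup G, H.Normal → (∀ h ∈ H, f h = 0) → H = ⊥) :
    {g : G | ∀ h : G, f h ≤ f (g * h)} =
      {g : G | ∀ x ∈ {y : G | (∀ h : G, f h ≤ f (y * h)) ∧ 0 < f y},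
        g * x ∈ {y : G | (∀ h : G, f h ≤ f (y * h)) ∧ 0 < f y}} := by
  classical
  obtain ⟨D, hD⟩ := hD
  -- existence of an element with positive f-value
  have hex : ∃ a : G, f a ≠ 0 := by
    by_contra hno
    push_neg at hno
    have htop : (⊤ : Subgroup G) = ⊥ := haper ⊤ inferInstance (fun h _ => hno h)
    obtain ⟨a, ha⟩ := exists_ne (1 : G)
    have : a ∈ (⊥ : Subgroup G) := htop ▸ Subgroup.mem_top a
    exact ha (Subgroup.mem_bot.mp this)
  obtain ⟨a, ha⟩ := hex
  have hbpos : ∃ b : G, 0 < f b := by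
    rcases lt_or_gt_of_ne ha with h | h
    · exact ⟨a⁻¹, by rw [MaxDomAux.f_inv hhom]; linarith⟩
    · exact ⟨a, h⟩
  obtain ⟨b, hb⟩ := hbpos
  obtain ⟨n, hn⟩ := exists_nat_ge (D / f b)
  have hnD : D ≤ (n : ℝ) * f b := by
    rw [div_le_iff₀ hb] at hn
    linarith
  have hyf : f (b ^ (n + 1)) = ((n : ℝ) + 1) * f b := by
    rw [MaxDomAux.f_npow hhom]
    push_cast
    ring
  have hy : MaxDomAux.IsPos f (b ^ (n + 1)) := by
    constructor
    · exact MaxDomAux.big_isMax hD (by rw [hyf]; nlinarith)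
    · rw [hyf]; positivity
  ext g
  simp only [Set.mem_setOf_eq]
  constructor
  · -- easy direction
    intro hg x hx
    refine ⟨?_, ?_⟩
    · intro h
      calc f h ≤ f (x * h) := hx.1 h
        _ ≤ f (g * (x * h)) := hg _
        _ = f (g * x * h) := by rw [mul_assoc]
    · exact lt_of_lt_of_le hx.2 (hg x)
  · -- hard direction
    intro hg h
    have hgS : MaxDomAux.Stab f g := fun x hx => hg x hx
    -- (g*h)^m * (h^m)⁻¹ is a product of conjugates of g, hence in Stab
    have hP : ∀ m : ℕ, MaxDomAux.Stab f ((g * h) ^ m * (h ^ m)⁻¹) := by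
      intro m
      induction m with
      | zero => simpa using MaxDomAux.stab_one (f := f)
      | succ k ih =>
        have e : (g * h) ^ (k + 1) * (h ^ (k + 1))⁻¹ =
            ((g * h) ^ k * (h ^ k)⁻¹) * (h ^ k * g * (h ^ k)⁻¹) := by
          rw [pow_succ, pow_succ]
          group
        rw [e]
        exact MaxDomAux.stab_mul ih (MaxDomAux.stab_conj hD hhom hgS (h ^ k))
    have hfP : ∀ m : ℕ, 0 ≤ f ((g * h) ^ m * (h ^ m)⁻¹) := fun m =>
      MaxDomAux.stab_f_nonneg hD hhom hy (hP m)
    have hkey : ∀ m : ℕ, (m : ℝ) * (f h - f (g * h)) ≤ D := by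
      intro m
      have h1 := (abs_le.mp (hD ((g * h) ^ m * (h ^ m)⁻¹) (h ^ m))).1
      have e : (g * h) ^ m * (h ^ m)⁻¹ * h ^ m = (g * h) ^ m := by group
      rw [e] at h1
      have h2 := MaxDomAux.f_npow hhom (g * h) m
      have h3 := MaxDomAux.f_npow hhom h m
      have h4 := hfP m
      have e2 : (m : ℝ) * (f h - f (g * h)) = (m : ℝ) * f h - (m : ℝ) * f (g * h) := by ring
      linarith
    have := maxdom_nonpos_of_bdd _ _ hkey
    linarith
end

section
/- Let G be a group, Z a subgroup of the center of G, and p : G → G₀ := G/Z the quotient homomorphism. Assume G₀ is a simple group (its only normal subgroups are the trivial subgroup and G₀ itself), and that the central extension is non-trivial in the sense that there is no group homomorphism s : G₀ → G with p ∘ s = id. If f is a homogeneous quasimorphism on G whose restriction to Z is an injective group homomorphism, then f is aperiodic. -/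
/-- Let `Z` be a central subgroup of `G` such that the central extension
`Z → G → G/Z` is non-split and `G/Z` is simple. Then any homogeneous
quasimorphism `f` on `G` restricting to an injective homomorphism on `Z`
is aperiodic. -/
theorem aperiodic_of_central_extension {G : Type*} [Group G]
    (Z : Subgroup G) (hZ : Z ≤ Subgroup.center G) [Z.Normal]
    (hsimple : ∀ N : Subgroup (G ⧸ Z), N.Normal → N = ⊥ ∨ N = ⊤)
    (hnonsplit : ¬ ∃ s : G ⧸ Z →* G,
        (QuotientGroup.mk' Z).comp s = MonoidHom.id (G ⧸ Z))
    (f : G → ℝ)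
    (hD : ∃ D : ℝ, ∀ g h : G, |f (g * h) - f g - f h| ≤ D)
    (hhom : ∀ (g : G) (n : ℤ), f (g ^ n) = n * f g)
    (hadd : ∀ z₁ ∈ Z, ∀ z₂ ∈ Z, f (z₁ * z₂) = f z₁ + f z₂)
    (hinj : ∀ z₁ ∈ Z, ∀ z₂ ∈ Z, f z₁ = f z₂ → z₁ = z₂) :
    ∀ H : Subgroup G, H.Normal → (∀ h ∈ H, f h = 0) → H = ⊥ := by
  intro H hH hHf
  have hf1 : f 1 = 0 := by simpa using hhom 1 0
  set p := QuotientGroup.mk' Z with hp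
  have hpsurj : Function.Surjective p := QuotientGroup.mk'_surjective Z
  have hN : (H.map p).Normal := Subgroup.Normal.map hH p hpsurj
  rcases hsimple (H.map p) hN with hbot | htop
  · ext h
    simp only [Subgroup.mem_bot]
    constructor
    · intro hh
      have hz : h ∈ Z := by
        have h1 : p h ∈ H.map p := Subgroup.mem_map_of_mem p hh
        rw [hbot, Subgroup.mem_bot] at h1
        exact (QuotientGroup.eq_one_iff h).mp h1
      exact hinj h hz 1 Z.one_mem (by rw [hHf h hh, hf1])
    · rintro rfl; exact H.one_mem
  · exfalso; apply hnonsplit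
    set φ : H →* G ⧸ Z := p.comp H.subtype with hφ
    have hφsurj : Function.Surjective φ := by
      intro x
      have hx : x ∈ H.map p := htop ▸ Subgroup.mem_top x
      rcases hx with ⟨h, hh, rfl⟩
      exact ⟨⟨h, hh⟩, rfl⟩
    have hφinj : Function.Injective φ := by
      rw [injective_iff_map_eq_one]
      rintro ⟨h, hh⟩ hphi
      have hz : h ∈ Z := (QuotientGroup.eq_one_iff h).mp hphi
      exact Subtype.ext (hinj h hz 1 Z.one_mem (by rw [hHf h hh, hf1]))
    let e := MulEquiv.ofBijective φ ⟨hφinj, hφsurj⟩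
    refine ⟨H.subtype.comp e.symm.toMonoidHom, ?_⟩
    ext x
    exact e.apply_symm_apply x
end

section
/- Let G be a subgroup of H on which the translation number T is not identically zero. Then the three sets {g ∈ G | T(g) > 0}, {g ∈ G | g(x) > x for all x ∈ ℝ}, and {g ∈ G | T(g) > 0 and T(gh) ≥ T(h) for all h ∈ G} coincide; in particular this common set is the dominant set of the maximal order semigroup sandwiched by T|_G. -/
open CircleDeg1Lift

lemma pos_iff_lt_map (g : CircleDeg1Liftˣ) :
    0 < translationNumber (g : CircleDeg1Lift) ↔ ∀ x : ℝ, x < (g : CircleDeg1Lift) x := by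
  constructor
  · intro h x
    by_contra hx
    push_neg at hx
    have : translationNumber (g : CircleDeg1Lift) ≤ (0 : ℤ) :=
      translationNumber_le_of_le_add_int _ (by simpa using hx)
    simp at this
    linarith
  · intro h
    have hc : Continuous (g : CircleDeg1Lift) :=
      (continuous_iff_surjective _).2 (isUnit_iff_bijective.mp g.isUnit).surjective
    obtain ⟨x, hx⟩ := exists_eq_add_translationNumber _ hc
    have := h x
    linarith [hx ▸ this]

/-- Let `G` be a subgroup of the group of lifts of circle homeomorphisms on
which the translation number `T` is not identically zero. Then the sets
`{g ∈ G | T(g) > 0}`, `{g ∈ G | ∀ x, g(x) > x}` and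
`{g ∈ G | T(g) > 0 ∧ ∀ h ∈ G, T(gh) ≥ T(h)}` coincide (the common set being
the dominant set of the maximal order semigroup sandwiched by `T|_G`). -/
theorem dominants_of_translation_number (G : Subgroup CircleDeg1Liftˣ)
    (hT : ∃ g ∈ G, translationNumber (g : CircleDeg1Lift) ≠ 0) :
    {g : CircleDeg1Liftˣ | g ∈ G ∧ 0 < translationNumber (g : CircleDeg1Lift)} =
      {g : CircleDeg1Liftˣ | g ∈ G ∧ ∀ x : ℝ, x < (g : CircleDeg1Lift) x} ∧
    {g : CircleDeg1Liftˣ | g ∈ G ∧ 0 < translationNumber (g : CircleDeg1Lift)} =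
      {g : CircleDeg1Liftˣ | g ∈ G ∧ 0 < translationNumber (g : CircleDeg1Lift) ∧
        ∀ h ∈ G, translationNumber (h : CircleDeg1Lift) ≤
          translationNumber ((g * h : CircleDeg1Liftˣ) : CircleDeg1Lift)} := by
  constructor
  · ext g
    simp only [Set.mem_setOf_eq, pos_iff_lt_map]
  · ext g
    simp only [Set.mem_setOf_eq]
    constructor
    · rintro ⟨hg, hpos⟩
      refine ⟨hg, hpos, fun h _ => ?_⟩
      have hlt := (pos_iff_lt_map g).1 hpos
      refine translationNumber_mono fun x => ?_
      exact (hlt _).le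
    · rintro ⟨hg, hpos, _⟩
      exact ⟨hg, hpos⟩
end

section
/- Let G be a subgroup of H containing small translations, i.e. for every δ > 0 there exists ε with 0 < ε < δ such that the translation τ_ε(x) := x + ε belongs to G, and suppose that the restriction of the translation number T to G is aperiodic. Then {g ∈ G | T(gh) ≥ T(h) for all h ∈ G} = {g ∈ G | g(x) ≥ x for all x ∈ ℝ}; that is, the maximal order semigroup of T|_G consists exactly of those g ∈ G with g(x) ≥ x for all x ∈ ℝ. -/
open CircleDeg1Lift

/-- Let `G` be a subgroup of the group of lifts of circle homeomorphisms
containing arbitrarily small translations, and suppose the restriction of the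
translation number `T` to `G` is aperiodic. Then the maximal order semigroup
`{g ∈ G | ∀ h ∈ G, T(gh) ≥ T(h)}` equals `{g ∈ G | ∀ x, g(x) ≥ x}`. -/
theorem max_order_semigroup_of_translation_number (G : Subgroup CircleDeg1Liftˣ)
    (hsmall : ∀ δ : ℝ, 0 < δ → ∃ ε : ℝ, 0 < ε ∧ ε < δ ∧
      translate (Multiplicative.ofAdd ε) ∈ G)
    (haper : ∀ N : Subgroup G, N.Normal →
      (∀ g ∈ N, translationNumber ((g : CircleDeg1Liftˣ) : CircleDeg1Lift) = 0) →
      N = ⊥) :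
    {g : CircleDeg1Liftˣ | g ∈ G ∧ ∀ h ∈ G,
        translationNumber ((h : CircleDeg1Liftˣ) : CircleDeg1Lift) ≤
          translationNumber ((g * h : CircleDeg1Liftˣ) : CircleDeg1Lift)} =
      {g : CircleDeg1Liftˣ | g ∈ G ∧ ∀ x : ℝ, x ≤ (g : CircleDeg1Lift) x} := by
  ext g
  simp only [Set.mem_setOf_eq]
  constructor
  · rintro ⟨hgG, hmax⟩
    refine ⟨hgG, ?_⟩
    by_contra hx
    push_neg at hx
    obtain ⟨x₀, hx₀⟩ := hx
    set δ : ℝ := x₀ - (g : CircleDeg1Lift) x₀ with hδdef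
    have hδ : 0 < δ := sub_pos.2 hx₀
    obtain ⟨ε, hε0, hεδ, hεG⟩ := hsmall δ hδ
    have key : ∀ n : ℕ, ∃ w : CircleDeg1Liftˣ, w ∈ G ∧
        (∀ h ∈ G, translationNumber ((h : CircleDeg1Liftˣ) : CircleDeg1Lift) ≤
          translationNumber ((w * h : CircleDeg1Liftˣ) : CircleDeg1Lift)) ∧
        (w : CircleDeg1Lift) x₀ ≤ x₀ - n * (δ - ε) := by
      intro n
      induction n with
      | zero =>
        exact ⟨1, one_mem G, fun h hh => by simp, by simp⟩
      | succ n ih =>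
        obtain ⟨w, hwG, hwmax, hwpt⟩ := ih
        set y := (w : CircleDeg1Lift) x₀ with hy
        set m : ℤ := ⌈(y - x₀) / ε⌉ with hm
        have hm1 : y - x₀ ≤ m * ε := by
          rw [← div_le_iff₀ hε0]
          exact Int.le_ceil _
        have hm2 : (m : ℝ) * ε < y - x₀ + ε := by
          have := Int.ceil_lt_add_one ((y - x₀) / ε)
          calc (m : ℝ) * ε < ((y - x₀) / ε + 1) * ε := by
                exact mul_lt_mul_of_pos_right this hε0
            _ = y - x₀ + ε := by field_simp
        set u : CircleDeg1Liftˣ := translate (Multiplicative.ofAdd ε) ^ m with hu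
        have huG : u ∈ G := zpow_mem hεG m
        have huapp : ∀ z : ℝ, (u : CircleDeg1Lift) z = m * ε + z := by
          intro z
          rw [hu, translate_zpow]
          exact translate_apply _ _
        have huinvapp : ∀ z : ℝ, ((u⁻¹ : CircleDeg1Liftˣ) : CircleDeg1Lift) z
            = -(m * ε) + z := by
          intro z
          rw [hu, ← zpow_neg, translate_zpow]
          simpa using translate_apply (-(m * ε)) z
        refine ⟨u * g * u⁻¹ * w, mul_mem (mul_mem (mul_mem huG hgG) (inv_mem huG)) hwG, ?_, ?_⟩
        · intro h hh
          have h1 := hwmax h hh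
          set k : CircleDeg1Liftˣ := w * h with hk
          have hkG : k ∈ G := mul_mem hwG hh
          set k' : CircleDeg1Liftˣ := u⁻¹ * k * u with hk'
          have hk'G : k' ∈ G := mul_mem (mul_mem (inv_mem huG) hkG) huG
          have h2 := hmax k' hk'G
          have e1 : translationNumber ((k : CircleDeg1Liftˣ) : CircleDeg1Lift) =
              translationNumber ((k' : CircleDeg1Liftˣ) : CircleDeg1Lift) := by
            rw [hk']
            simp only [Units.val_mul]
            exact (translationNumber_conj_eq' u _).symm
          have e2 : translationNumber ((u * g * u⁻¹ * k : CircleDeg1Liftˣ) : CircleDeg1Lift) =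
              translationNumber ((g * k' : CircleDeg1Liftˣ) : CircleDeg1Lift) := by
            have : u * g * u⁻¹ * k = u * (g * k') * u⁻¹ := by
              rw [hk']
              group
            rw [this]
            simp only [Units.val_mul]
            exact translationNumber_conj_eq u _
          calc translationNumber ((h : CircleDeg1Liftˣ) : CircleDeg1Lift)
              ≤ translationNumber ((k : CircleDeg1Liftˣ) : CircleDeg1Lift) := h1
            _ = translationNumber ((k' : CircleDeg1Liftˣ) : CircleDeg1Lift) := e1
            _ ≤ translationNumber ((g * k' : CircleDeg1Liftˣ) : CircleDeg1Lift) := h2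
            _ = translationNumber ((u * g * u⁻¹ * k : CircleDeg1Liftˣ) : CircleDeg1Lift) :=
                e2.symm
            _ = translationNumber ((u * g * u⁻¹ * (w * h) : CircleDeg1Liftˣ) : CircleDeg1Lift) :=
                by rw [hk, mul_assoc]
        · have happ : ((u * g * u⁻¹ * w : CircleDeg1Liftˣ) : CircleDeg1Lift) x₀
              = (u : CircleDeg1Lift) ((g : CircleDeg1Lift)
                  (((u⁻¹ : CircleDeg1Liftˣ) : CircleDeg1Lift) y)) := by
            simp only [Units.val_mul, mul_apply, hy]
          have h3 : ((u⁻¹ : CircleDeg1Liftˣ) : CircleDeg1Lift) y ≤ x₀ := by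
            rw [huinvapp]
            linarith
          have h4 : (g : CircleDeg1Lift) (((u⁻¹ : CircleDeg1Liftˣ) : CircleDeg1Lift) y)
              ≤ x₀ - δ := by
            calc (g : CircleDeg1Lift) (((u⁻¹ : CircleDeg1Liftˣ) : CircleDeg1Lift) y)
                ≤ (g : CircleDeg1Lift) x₀ := (g : CircleDeg1Lift).mono h3
              _ = x₀ - δ := by rw [hδdef]; ring
          calc ((u * g * u⁻¹ * w : CircleDeg1Liftˣ) : CircleDeg1Lift) x₀
              = m * ε + (g : CircleDeg1Lift) (((u⁻¹ : CircleDeg1Liftˣ) : CircleDeg1Lift) y) := by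
                rw [happ, huapp]
            _ ≤ m * ε + (x₀ - δ) := by linarith
            _ ≤ (y - x₀ + ε) + (x₀ - δ) := by linarith [hm2.le]
            _ = y - (δ - ε) := by ring
            _ ≤ (x₀ - n * (δ - ε)) - (δ - ε) := by linarith
            _ = x₀ - (n + 1 : ℕ) * (δ - ε) := by push_cast; ring
    obtain ⟨n, hn⟩ := exists_nat_gt (1 / (δ - ε))
    have hδε : 0 < δ - ε := sub_pos.2 hεδ
    have hn1 : 1 < n * (δ - ε) := by
      rw [div_lt_iff₀ hδε] at hn
      linarith
    obtain ⟨w, hwG, hwmax, hwpt⟩ := key n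
    have hnonneg : (0 : ℝ) ≤ translationNumber ((w : CircleDeg1Liftˣ) : CircleDeg1Lift) := by
      have := hwmax 1 (one_mem G)
      simpa using this
    have hle : translationNumber ((w : CircleDeg1Liftˣ) : CircleDeg1Lift) ≤ ((-1 : ℤ) : ℝ) := by
      apply translationNumber_le_of_le_add_int (x := x₀)
      push_cast
      linarith
    norm_num at hle
    linarith
  · rintro ⟨hgG, hpt⟩
    refine ⟨hgG, fun h hh => ?_⟩
    apply translationNumber_mono
    intro x
    have : ((g * h : CircleDeg1Liftˣ) : CircleDeg1Lift) x
        = (g : CircleDeg1Lift) ((h : CircleDeg1Lift) x) := by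
      simp [Units.val_mul, mul_apply]
    rw [this]
    exact hpt _
end

section
/- In the group H, one has {g ∈ H | T(gh) ≥ T(h) for all h ∈ H} = {g ∈ H | g(x) ≥ x for all x ∈ ℝ}. Equivalently, the maximal bi-invariant partial order on H associated with the translation number T is given by: g ≥ h if and only if g(x) ≥ h(x) for all x ∈ ℝ. -/
open CircleDeg1Lift

private lemma units_continuous (f : CircleDeg1Liftˣ) :
    Continuous ⇑(f : CircleDeg1Lift) :=
  (continuous_iff_surjective _).2 (toOrderIso f).surjective

private lemma key_mem_iff (g : CircleDeg1Liftˣ) :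
    (∀ h : CircleDeg1Liftˣ,
        translationNumber (h : CircleDeg1Lift) ≤
          translationNumber ((g * h : CircleDeg1Liftˣ) : CircleDeg1Lift)) ↔
      ∀ x : ℝ, x ≤ (g : CircleDeg1Lift) x := by
  constructor
  · intro hS
    by_contra hx
    push_neg at hx
    obtain ⟨x₀, hx₀⟩ := hx
    -- `g x₀ < x₀`; build a unit `u` with a fixed point such that `g * u < id` pointwise.
    set gi : CircleDeg1Lift := ((g⁻¹ : CircleDeg1Liftˣ) : CircleDeg1Lift) with hgi
    set y₀ : ℝ := (g : CircleDeg1Lift) x₀ with hy₀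
    have hgiy₀ : gi y₀ = x₀ := units_inv_apply_apply g x₀
    have hy₀lt : y₀ < x₀ := hx₀
    set δ : ℝ := (x₀ - y₀) / 2 with hδdef
    have hδ : 0 < δ := by
      simp only [hδdef]; linarith
    -- the lift `x ↦ -δ + gi x`
    set t : CircleDeg1Liftˣ := translate (Multiplicative.ofAdd (-δ)) * g⁻¹ with ht
    have htapp : ∀ x, (t : CircleDeg1Lift) x = -δ + gi x := fun x => rfl
    -- `hf = min (-δ + gi x) x`
    set hf : CircleDeg1Lift := (t : CircleDeg1Lift) ⊓ 1 with hhf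
    have hfapp : ∀ x, hf x = min (-δ + gi x) x := fun x => rfl
    have hgi_sm : StrictMono gi := (toOrderIso g⁻¹).strictMono
    have hg_sm : StrictMono ⇑(g : CircleDeg1Lift) := (toOrderIso g).strictMono
    have hf_sm : StrictMono ⇑hf := by
      have h1 : StrictMono fun x : ℝ => -δ + gi x := fun a b hab => by
        simpa using hgi_sm hab
      intro a b hab
      rw [hfapp, hfapp]
      exact lt_min ((min_le_left _ _).trans_lt (h1 hab))
        ((min_le_right _ _).trans_lt hab)
    have hf_cont : Continuous ⇑hf := by
      have h1 : Continuous fun x : ℝ => -δ + gi x :=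
        continuous_const.add (units_continuous g⁻¹)
      have := h1.min continuous_id
      rw [show ⇑hf = fun x => min (-δ + gi x) x from funext hfapp]
      simpa using this
    have hf_bij : Function.Bijective ⇑hf :=
      ⟨hf_sm.injective, (continuous_iff_surjective hf).1 hf_cont⟩
    have hf_unit : IsUnit hf := isUnit_iff_bijective.2 hf_bij
    set u : CircleDeg1Liftˣ := hf_unit.unit with hu
    have huval : (u : CircleDeg1Lift) = hf := hf_unit.unit_spec
    -- `hf y₀ = y₀`
    have hfix : hf y₀ = y₀ := by
      rw [hfapp]
      have : y₀ ≤ -δ + gi y₀ := by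
        rw [hgiy₀]; simp only [hδdef]; linarith
      exact min_eq_right this
    have hτu : translationNumber (u : CircleDeg1Lift) = 0 := by
      rw [huval]
      have : hf y₀ = y₀ + (0 : ℤ) := by simpa using hfix
      simpa using hf.translationNumber_of_eq_add_int this
    -- `(g * u) x < x` for all `x`
    set gm : CircleDeg1Lift := ((g * u : CircleDeg1Liftˣ) : CircleDeg1Lift) with hgm
    have hgmapp : ∀ x, gm x = (g : CircleDeg1Lift) (hf x) := by
      intro x
      rw [hgm, Units.val_mul, huval]
      rfl
    have hgmlt : ∀ x, gm x < x := by
      intro x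
      rw [hgmapp]
      have h1 : hf x ≤ -δ + gi x := min_le_left _ _
      have h2 : -δ + gi x < gi x := by linarith
      calc (g : CircleDeg1Lift) (hf x) ≤ (g : CircleDeg1Lift) (-δ + gi x) :=
            (g : CircleDeg1Lift).mono h1
        _ < (g : CircleDeg1Lift) (gi x) := hg_sm h2
        _ = x := units_apply_inv_apply g x
    -- hence `τ (g * u) < 0`
    have hgm_cont : Continuous ⇑gm :=
      (continuous_iff_surjective gm).2 (toOrderIso (g * u)).surjective
    have hτle : translationNumber gm ≤ 0 := by
      have : gm 0 ≤ 0 + (0 : ℤ) := by simpa using (hgmlt 0).le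
      simpa using gm.translationNumber_le_of_le_add_int this
    have hτne : translationNumber gm ≠ 0 := by
      intro h0
      have : ∃ x, gm x = x + (0 : ℤ) :=
        (gm.translationNumber_eq_int_iff hgm_cont).1 (by simpa using h0)
      obtain ⟨x, hx⟩ := this
      exact absurd (by simpa using hx) (hgmlt x).ne
    have := hS u
    rw [hτu, ← hgm] at this
    exact hτne (le_antisymm hτle this)
  · intro hg h
    apply translationNumber_mono
    intro x
    rw [Units.val_mul]
    exact hg (((h : CircleDeg1Lift)) x)

/-- In the group `H` of lifts of orientation-preserving circle homeomorphisms,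
the maximal order semigroup of the translation number `T` is
`{g | ∀ x, g(x) ≥ x}`; equivalently, the associated maximal bi-invariant
partial order is given by `g ≥ h` iff `g(x) ≥ h(x)` for all `x`. -/
theorem max_order_on_circle_lifts :
    ({g : CircleDeg1Liftˣ | ∀ h : CircleDeg1Liftˣ,
        translationNumber (h : CircleDeg1Lift) ≤
          translationNumber ((g * h : CircleDeg1Liftˣ) : CircleDeg1Lift)} =
      {g : CircleDeg1Liftˣ | ∀ x : ℝ, x ≤ (g : CircleDeg1Lift) x}) ∧
    ∀ g h : CircleDeg1Liftˣ,
      ((g * h⁻¹ : CircleDeg1Liftˣ) ∈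
          {k : CircleDeg1Liftˣ | ∀ l : CircleDeg1Liftˣ,
            translationNumber (l : CircleDeg1Lift) ≤
              translationNumber ((k * l : CircleDeg1Liftˣ) : CircleDeg1Lift)}
        ↔ ∀ x : ℝ, (h : CircleDeg1Lift) x ≤ (g : CircleDeg1Lift) x) := by
  constructor
  · ext g
    exact key_mem_iff g
  · intro g h
    rw [Set.mem_setOf_eq, key_mem_iff (g * h⁻¹)]
    constructor
    · intro H x
      have := H ((h : CircleDeg1Lift) x)
      rwa [Units.val_mul, CircleDeg1Lift.mul_apply, units_inv_apply_apply] at this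
    · intro H x
      rw [Units.val_mul, CircleDeg1Lift.mul_apply]
      calc x = (h : CircleDeg1Lift) (((h⁻¹ : CircleDeg1Liftˣ) : CircleDeg1Lift) x) :=
            (units_apply_inv_apply h x).symm
        _ ≤ (g : CircleDeg1Lift) (((h⁻¹ : CircleDeg1Liftˣ) : CircleDeg1Lift) x) := H _
end

section
/- Let G be a connected topological group and f a nonzero aperiodic continuous homogeneous quasimorphism on G. Suppose G⁺ is the order semigroup of a bi-invariant partial order on G sandwiched by f, G⁺ is closed, and: (†) the dominant set G⁺⁺ of G⁺ is open in G; (††) the interior Int(G⁺) is path-connected and dense in G⁺, and there exists a continuous one-parameter semigroup T : [0,∞) → G (i.e. T(0) = e and T(s+t) = T(s)T(t) for all s,t ≥ 0) with T(t) ∈ Int(G⁺) for all t > 0. Then G⁺ = G⁺_max := {g ∈ G | f(gh) ≥ f(h) for all h ∈ G}; in particular G⁺ contains every order semigroup of a bi-invariant partial order on G sandwiched by f. -/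
/-- Recognition criterion: let `G` be a connected topological group, `f` a
nonzero aperiodic continuous homogeneous quasimorphism and `G⁺` a closed order
semigroup of a bi-invariant partial order sandwiched by `f`, whose dominant set
is open, whose interior is path-connected and dense in `G⁺`, and which contains
a one-parameter semigroup in its interior. Then `G⁺` equals the maximal order
semigroup `G⁺_max = {g | ∀ h, f(gh) ≥ f(h)}`, hence contains every order
semigroup of a bi-invariant partial order sandwiched by `f`. -/
theorem recognition_of_max_order {G : Type*} [Group G] [TopologicalSpace G]
    [IsTopologicalGroup G] [ConnectedSpace G]
    (f : G → ℝ) (hcont : Continuous f)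
    (hD : ∃ D : ℝ, ∀ g h : G, |f (g * h) - f g - f h| ≤ D)
    (hhom : ∀ (g : G) (n : ℤ), f (g ^ n) = n * f g)
    (hf0 : f ≠ 0)
    (haper : ∀ H : Subgroup G, H.Normal → (∀ h ∈ H, f h = 0) → H = ⊥)
    (P : Set G)
    (hone : (1 : G) ∈ P)
    (hmul : ∀ a ∈ P, ∀ b ∈ P, a * b ∈ P)
    (hconj : ∀ g : G, ∀ a ∈ P, g * a * g⁻¹ ∈ P)
    (hpointed : ∀ a ∈ P, a⁻¹ ∈ P → a = 1)
    (hsandwich : ∃ C₁ C₂ : ℝ, {g : G | C₁ ≤ f g} ⊆ P ∧ P ⊆ {g : G | C₂ ≤ f g})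
    (hclosed : IsClosed P)
    (hdomopen : IsOpen {h : G | h ∈ P ∧ h ≠ 1 ∧ ∀ g : G, ∃ n : ℕ, h ^ n * g⁻¹ ∈ P})
    (hpath : IsPathConnected (interior P))
    (hdense : P ⊆ closure (interior P))
    (T : ℝ → G) (hTcont : ContinuousOn T (Set.Ici 0)) (hT0 : T 0 = 1)
    (hTadd : ∀ s t : ℝ, 0 ≤ s → 0 ≤ t → T (s + t) = T s * T t)
    (hTint : ∀ t : ℝ, 0 < t → T t ∈ interior P) :
    P = {g : G | ∀ h : G, f h ≤ f (g * h)} ∧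
    (∀ Q : Set G, (1 : G) ∈ Q →
        (∀ a ∈ Q, ∀ b ∈ Q, a * b ∈ Q) →
        (∀ k : G, ∀ a ∈ Q, k * a * k⁻¹ ∈ Q) →
        (∀ a ∈ Q, a⁻¹ ∈ Q → a = 1) →
        (∃ C₁ C₂ : ℝ, {g : G | C₁ ≤ f g} ⊆ Q ∧ Q ⊆ {g : G | C₂ ≤ f g}) →
        Q ⊆ P) := by
  obtain ⟨D, hD⟩ := hD
  obtain ⟨C₁, C₂, hC₁, hC₂⟩ := hsandwich
  -- basic facts about f
  have hf1 : f 1 = 0 := by have := hhom 1 0; simpa using this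
  have hfinv : ∀ g : G, f g⁻¹ = - f g := by
    intro g; have := hhom g (-1); simpa using this
  have hfpow : ∀ (g : G) (n : ℕ), f (g ^ n) = n * f g := by
    intro g n
    have := hhom g (n : ℤ)
    rw [zpow_natCast] at this
    simpa using this
  -- f is unbounded above
  have hunbdd : ∀ M : ℝ, ∃ g : G, M < f g := by
    intro M
    obtain ⟨g₀, hg₀⟩ : ∃ g₀, f g₀ ≠ 0 := by
      by_contra h
      push_neg at h
      exact hf0 (funext h)
    obtain ⟨g₁, hg₁⟩ : ∃ g₁, 0 < f g₁ := by
      rcases lt_or_gt_of_ne hg₀ with h | h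
      · exact ⟨g₀⁻¹, by rw [hfinv]; linarith⟩
      · exact ⟨g₀, h⟩
    obtain ⟨n, hn⟩ := exists_nat_gt (M / f g₁)
    refine ⟨g₁ ^ n, ?_⟩
    rw [hfpow]
    calc M = (M / f g₁) * f g₁ := by field_simp
    _ < n * f g₁ := mul_lt_mul_of_pos_right hn hg₁
  -- any sandwiched conjugation-invariant submonoid is contained in P_max
  have key : ∀ Q : Set G, (1 : G) ∈ Q → (∀ a ∈ Q, ∀ b ∈ Q, a * b ∈ Q) →
      (∀ k : G, ∀ a ∈ Q, k * a * k⁻¹ ∈ Q) → ∀ C : ℝ, (∀ q ∈ Q, C ≤ f q) →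
      ∀ g ∈ Q, ∀ h : G, f h ≤ f (g * h) := by
    intro Q h1Q hmulQ hconjQ C hCQ g hgQ h
    have hc : ∀ n : ℕ, ∃ c ∈ Q, (g * h) ^ n = c * h ^ n := by
      intro n
      induction n with
      | zero => exact ⟨1, h1Q, by simp⟩
      | succ n ih =>
        obtain ⟨c, hcQ, hce⟩ := ih
        refine ⟨c * (h ^ n * g * (h ^ n)⁻¹), hmulQ _ hcQ _ (hconjQ _ _ hgQ), ?_⟩
        rw [pow_succ, hce]
        group
    have hb : ∀ n : ℕ, (n : ℝ) * f h - D + C ≤ n * f (g * h) := by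
      intro n
      obtain ⟨c, hcQ, hce⟩ := hc n
      have h1 := hD c (h ^ n)
      have h2 := hCQ c hcQ
      have h3 := hfpow h n
      have h4 := hfpow (g * h) n
      rw [hce] at h4
      have h5 := abs_le.mp h1
      linarith [h5.1]
    by_contra hcon
    push_neg at hcon
    have hε : 0 < f h - f (g * h) := by linarith
    obtain ⟨n, hn⟩ := exists_nat_gt ((D - C) / (f h - f (g * h)))
    have h6 : D - C < (n : ℝ) * (f h - f (g * h)) := by
      rwa [div_lt_iff₀ hε] at hn
    have h7 := hb n
    nlinarith
  -- every element of the interior of P is dominant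
  have hdom : ∀ u ∈ interior P, ∀ g : G, ∃ n : ℕ, u ^ n * g⁻¹ ∈ P := by
    intro u hu g
    set V := {v : G | u * v ∈ interior P} with hVdef
    have hVopen : IsOpen V := isOpen_interior.preimage (continuous_mul_left u)
    have hV1 : (1 : G) ∈ V := by simpa [hVdef] using hu
    have hVP : ∀ v ∈ V, u * v ∈ P := fun v hv => interior_subset hv
    set A := {x : G | ∃ n : ℕ, u ^ n * x⁻¹ ∈ P} with hAdef
    have step : ∀ x y : G, (∃ n : ℕ, u ^ n * x⁻¹ ∈ P) → x * y⁻¹ ∈ V →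
        ∃ n : ℕ, u ^ n * y⁻¹ ∈ P := by
      rintro x y ⟨n, hn⟩ hxy
      refine ⟨n + 1, ?_⟩
      have he : u ^ (n + 1) * y⁻¹ = (u * (u ^ n * x⁻¹) * u⁻¹) * (u * (x * y⁻¹)) := by
        group
      rw [he]
      exact hmul _ (hconj u _ hn) _ (hVP _ hxy)
    have hAopen : IsOpen A := by
      rw [isOpen_iff_mem_nhds]
      intro x hx
      have hcont2 : Continuous fun y : G => x * y⁻¹ :=
        (continuous_mul_left x).comp continuous_inv
      have hnb : {y : G | x * y⁻¹ ∈ V} ∈ nhds x := by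
        refine (hVopen.preimage hcont2).mem_nhds ?_
        simp [hV1]
      filter_upwards [hnb] with y hy
      exact step x y hx hy
    have hAclosed : IsClosed A := by
      apply isClosed_of_closure_subset
      intro x hx
      have hcont2 : Continuous fun y : G => y * x⁻¹ := continuous_mul_right x⁻¹
      have hnb : {y : G | y * x⁻¹ ∈ V} ∈ nhds x := by
        refine (hVopen.preimage hcont2).mem_nhds ?_
        simp [hV1]
      obtain ⟨y, hy1, hy2⟩ := mem_closure_iff_nhds.mp hx _ hnb
      exact step y x hy2 hy1
    have hA1 : (1 : G) ∈ A := ⟨0, by simpa using hone⟩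
    have hAclopen : IsClopen A := ⟨hAclosed, hAopen⟩
    have hAuniv : A = Set.univ := hAclopen.eq_univ ⟨1, hA1⟩
    have : g ∈ A := by rw [hAuniv]; trivial
    exact this
  -- hence f is positive on the interior of P
  have hdompos : ∀ u ∈ interior P, 0 < f u := by
    intro u hu
    by_contra hle
    push_neg at hle
    obtain ⟨g, hg⟩ := hunbdd (D - C₂)
    obtain ⟨n, hn⟩ := hdom u hu g
    have h1 := hC₂ hn
    have h2 := hD (u ^ n) g⁻¹
    have h3 := hfpow u n
    have h4 := hfinv g
    have h5 : (n : ℝ) * f u ≤ 0 := mul_nonpos_of_nonneg_of_nonpos (Nat.cast_nonneg n) hle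
    have h6 := abs_le.mp h2
    simp only [Set.mem_setOf_eq] at h1
    linarith [h6.2]
  -- powers of the one-parameter semigroup
  have hTpow : ∀ n : ℕ, T (n : ℝ) = (T 1) ^ n := by
    intro n
    induction n with
    | zero => simpa using hT0
    | succ n ih =>
      have hcast : ((n + 1 : ℕ) : ℝ) = (n : ℝ) + 1 := by push_cast; ring
      rw [hcast, hTadd _ _ (Nat.cast_nonneg n) zero_le_one, ih, pow_succ]
  -- the main equality
  have hPeq : P = {g : G | ∀ h : G, f h ≤ f (g * h)} := by
    apply Set.Subset.antisymm
    · intro g hgP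
      intro h
      exact key P hone hmul hconj C₂ (fun q hq => hC₂ hq) g hgP h
    · intro g hg
      simp only [Set.mem_setOf_eq] at hg
      have hcpos : 0 < f (T 1) := hdompos _ (hTint 1 one_pos)
      set S := {s : ℝ | 0 < s ∧ g * T s ∈ P} with hSdef
      have hSne : S.Nonempty := by
        obtain ⟨n, hn⟩ := exists_nat_gt (max 0 (C₁ / f (T 1)))
        refine ⟨(n : ℝ), ?_, ?_⟩
        · exact lt_of_le_of_lt (le_max_left 0 _) hn
        · apply hC₁
          have h1 : f (T (n : ℝ)) = n * f (T 1) := by rw [hTpow n, hfpow]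
          have h2 : C₁ / f (T 1) < n := lt_of_le_of_lt (le_max_right _ _) hn
          have h3 : C₁ < n * f (T 1) := by rwa [div_lt_iff₀ hcpos] at h2
          have h4 := hg (T (n : ℝ))
          show C₁ ≤ f (g * T (n : ℝ))
          linarith
      have hSbdd : BddBelow S := ⟨0, fun s hs => hs.1.le⟩
      set s₀ := sInf S with hs₀def
      have hs₀0 : 0 ≤ s₀ := le_csInf hSne (fun s hs => hs.1.le)
      have hs₀cl : s₀ ∈ closure S := csInf_mem_closure hSne hSbdd
      have hφ : ContinuousWithinAt (fun s => g * T s) (Set.Ici 0) s₀ :=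
        continuousWithinAt_const.mul (hTcont s₀ hs₀0)
      have hSsub : S ⊆ Set.Ici 0 := fun s hs => hs.1.le
      have hmem : g * T s₀ ∈ P := by
        have h1 : (fun s => g * T s) s₀ ∈ closure ((fun s => g * T s) '' S) :=
          (hφ.mono hSsub).mem_closure_image hs₀cl
        have h2 : (fun s => g * T s) '' S ⊆ P := by
          rintro x ⟨s, hs, rfl⟩
          exact hs.2
        exact closure_minimal h2 hclosed h1
      rcases eq_or_lt_of_le hs₀0 with heq | hlt
      · have : g * T 0 ∈ P := by rw [heq]; exact hmem
        simpa [hT0] using this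
      · exfalso
        have hTs₀ : T s₀ ∈ interior P := hTint s₀ hlt
        have hfx : 0 < f (g * T s₀) := lt_of_lt_of_le (hdompos _ hTs₀) (hg (T s₀))
        have hxdom : (g * T s₀) ∈
            {h : G | h ∈ P ∧ h ≠ 1 ∧ ∀ g' : G, ∃ n : ℕ, h ^ n * g'⁻¹ ∈ P} := by
          refine ⟨hmem, ?_, ?_⟩
          · intro he
            rw [he, hf1] at hfx
            exact lt_irrefl _ hfx
          · intro g'
            obtain ⟨n, hn⟩ := exists_nat_gt ((C₁ + f g' + D) / f (g * T s₀))
            refine ⟨n, hC₁ ?_⟩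
            have h2 := hD ((g * T s₀) ^ n) g'⁻¹
            have h3 := hfpow (g * T s₀) n
            have h4 := hfinv g'
            have h5 : C₁ + f g' + D < n * f (g * T s₀) := by
              rwa [div_lt_iff₀ hfx] at hn
            have h6 := abs_le.mp h2
            show C₁ ≤ f ((g * T s₀) ^ n * g'⁻¹)
            linarith [h6.1]
        have hxint : g * T s₀ ∈ interior P :=
          interior_maximal (fun h hh => hh.1) hdomopen hxdom
        have hev : ∀ᶠ s in nhds s₀, g * T s ∈ interior P := by
          have h1 : nhdsWithin s₀ (Set.Ici 0) = nhds s₀ :=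
            nhdsWithin_eq_nhds.mpr (Filter.mem_of_superset (Ioi_mem_nhds hlt)
              Set.Ioi_subset_Ici_self)
          have h2 : Filter.Tendsto (fun s => g * T s) (nhdsWithin s₀ (Set.Ici 0))
              (nhds (g * T s₀)) := hφ
          rw [h1] at h2
          exact h2 (isOpen_interior.mem_nhds hxint)
        have hlow : ∀ᶠ s in nhds s₀, 0 < s := eventually_gt_nhds hlt
        have hfreq : ∃ s, (g * T s ∈ interior P ∧ 0 < s) ∧ s < s₀ := by
          have hne : (nhdsWithin s₀ (Set.Iio s₀)).NeBot := nhdsLT_neBot s₀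
          have hcomb := ((hev.and hlow).filter_mono
            (nhdsWithin_le_nhds (s := Set.Iio s₀))).and
            (eventually_mem_nhdsWithin (s := Set.Iio s₀) (a := s₀))
          obtain ⟨s, hs1, hs2⟩ := hcomb.exists
          exact ⟨s, hs1, hs2⟩
        obtain ⟨s, ⟨hsP, hspos⟩, hss⟩ := hfreq
        have hsS : s ∈ S := ⟨hspos, interior_subset hsP⟩
        exact absurd hss (not_lt.mpr (csInf_le hSbdd hsS))
  refine ⟨hPeq, ?_⟩
  intro Q hQ1 hQmul hQconj _ hQsand
  obtain ⟨C₁', C₂', _, h2⟩ := hQsand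
  intro q hq
  rw [hPeq]
  intro h
  exact key Q hQ1 hQmul hQconj C₂' (fun a ha => h2 ha) q hq h
end

section
/- Let G be a connected topological group, f a nonzero aperiodic continuous homogeneous quasimorphism on G, and G⁺ the order semigroup of a bi-invariant partial order on G sandwiched by f such that the interior Int(G⁺) is path-connected and dense in G⁺. If T : [0,∞) → G is a continuous one-parameter semigroup (T(0) = e and T(s+t) = T(s)T(t) for all s,t ≥ 0) with T(t) ∈ Int(G⁺) for all t > 0, then f(T(t)) → ∞ as t → ∞. -/
/-- Let `G` be a connected topological group, `f` a nonzero aperiodic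
continuous homogeneous quasimorphism, `G⁺` an order semigroup sandwiched by
`f` with path-connected interior dense in `G⁺`, and `T` a continuous
one-parameter semigroup with `T(t) ∈ Int(G⁺)` for `t > 0`. Then
`f(T(t)) → ∞` as `t → ∞`. -/
theorem ray_tendsto_atTop {G : Type*} [Group G] [TopologicalSpace G]
    [IsTopologicalGroup G] [ConnectedSpace G]
    (f : G → ℝ) (hcont : Continuous f)
    (hD : ∃ D : ℝ, ∀ g h : G, |f (g * h) - f g - f h| ≤ D)
    (hhom : ∀ (g : G) (n : ℤ), f (g ^ n) = n * f g)
    (hf0 : f ≠ 0)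
    (haper : ∀ H : Subgroup G, H.Normal → (∀ h ∈ H, f h = 0) → H = ⊥)
    (P : Set G)
    (hone : (1 : G) ∈ P)
    (hmul : ∀ a ∈ P, ∀ b ∈ P, a * b ∈ P)
    (hconj : ∀ g : G, ∀ a ∈ P, g * a * g⁻¹ ∈ P)
    (hpointed : ∀ a ∈ P, a⁻¹ ∈ P → a = 1)
    (hsandwich : ∃ C₁ C₂ : ℝ, {g : G | C₁ ≤ f g} ⊆ P ∧ P ⊆ {g : G | C₂ ≤ f g})
    (hpath : IsPathConnected (interior P))
    (hdense : P ⊆ closure (interior P))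
    (T : ℝ → G) (hTcont : ContinuousOn T (Set.Ici 0)) (hT0 : T 0 = 1)
    (hTadd : ∀ s t : ℝ, 0 ≤ s → 0 ≤ t → T (s + t) = T s * T t)
    (hTint : ∀ t : ℝ, 0 < t → T t ∈ interior P) :
    Filter.Tendsto (fun t : ℝ => f (T t)) Filter.atTop Filter.atTop := by
  obtain ⟨D, hDle⟩ := hD
  obtain ⟨C₁, C₂, hC₁, hC₂⟩ := hsandwich
  have hf1 : f 1 = 0 := by simpa using hhom 1 0
  have hinv : ∀ g : G, f g⁻¹ = - f g := by
    intro g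
    have := hhom g (-1)
    simpa using this
  -- T of naturals
  have hTn : ∀ n : ℕ, T n = (T 1) ^ n := by
    intro n
    induction n with
    | zero => simpa using hT0
    | succ n ih =>
      have h := hTadd n 1 (by positivity) zero_le_one
      push_cast
      rw [h, ih, pow_succ]
  set a := f (T 1) with ha
  have hfTn : ∀ n : ℕ, f (T n) = n * a := by
    intro n
    rw [hTn n, ← zpow_natCast, hhom]
    push_cast; ring
  have hD0 : (0:ℝ) ≤ D := le_trans (abs_nonneg _) (hDle 1 1)
  -- a ≥ 0
  have hTinP : ∀ t : ℝ, 0 < t → T t ∈ P := fun t ht => interior_subset (hTint t ht)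
  have ha0 : 0 ≤ a := by
    by_contra hlt
    push_neg at hlt
    obtain ⟨n, hn⟩ := exists_nat_gt (C₂ / a)
    have hmem : f (T (n + 1 : ℕ)) ∈ {g : ℝ | True} := trivial
    have h1 : C₂ ≤ f (T ((n:ℕ) + 1 : ℕ)) := by
      apply hC₂
      have : (0:ℝ) < ((n:ℕ) + 1 : ℕ) := by positivity
      exact hTinP _ this
    rw [hfTn] at h1
    have h2 : ((n:ℝ) + 1) * a < C₂ := by
      have h3 : C₂ / a * a = C₂ := div_mul_cancel₀ _ (ne_of_lt hlt)
      nlinarith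
    push_cast at h1
    linarith
  -- a ≠ 0
  have hane : a ≠ 0 := by
    intro haz
    -- symmetric open nbhd V of 1 with T1 * V ⊆ interior P
    set V : Set G := ((fun x => T 1 * x) ⁻¹' interior P) ∩ ((fun x : G => x⁻¹) ⁻¹' ((fun x => T 1 * x) ⁻¹' interior P)) with hV
    have hVopen : IsOpen V := by
      apply IsOpen.inter
      · exact isOpen_interior.preimage (continuous_mul_left _)
      · exact (isOpen_interior.preimage (continuous_mul_left _)).preimage continuous_inv
    have hV1 : (1:G) ∈ V := by
      constructor <;> · simp only [Set.mem_preimage, inv_one, mul_one]; exact hTint 1 one_pos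
    -- the subgroup generated by V is everything
    have hVsub : V ⊆ (Subgroup.closure V : Set G) := Subgroup.subset_closure
    have hHopen : IsOpen ((Subgroup.closure V : Subgroup G) : Set G) :=
      Subgroup.isOpen_of_mem_nhds _ (Filter.mem_of_superset (hVopen.mem_nhds hV1) hVsub)
    have hHuniv : ((Subgroup.closure V : Subgroup G) : Set G) = Set.univ := by
      have hclopen : IsClopen ((Subgroup.closure V : Subgroup G) : Set G) :=
        ⟨Subgroup.isClosed_of_isOpen _ hHopen, hHopen⟩
      exact hclopen.eq_univ ⟨1, (Subgroup.closure V).one_mem⟩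
    -- every element is dominated by some T m
    have hdom : ∀ g : G, ∃ m : ℕ, T m * g⁻¹ ∈ P := by
      intro g
      have hg : g ∈ Subgroup.closure V :=
        Set.eq_univ_iff_forall.mp hHuniv g
      have hg' : g ∈ Submonoid.closure (V ∪ V⁻¹) := by
        rw [← Subgroup.closure_toSubmonoid] at *
        exact hg
      refine Submonoid.closure_induction ?_ ?_ ?_ hg'
      · rintro x (hx | hx)
        · refine ⟨1, ?_⟩
          rw [Nat.cast_one]
          exact interior_subset hx.2
        · refine ⟨1, ?_⟩
          have hxV : x⁻¹ ∈ V := hx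
          rw [Nat.cast_one]
          exact interior_subset hxV.1
      · exact ⟨0, by rw [Nat.cast_zero, hT0]; simpa using hone⟩
      · rintro x y - - ⟨m, hm⟩ ⟨k, hk⟩
        refine ⟨m + k, ?_⟩
        have hT : T ((m + k : ℕ) : ℝ) = T m * T k := by
          push_cast
          exact hTadd m k (by positivity) (by positivity)
        rw [hT]
        have heq : T (m:ℝ) * T (k:ℝ) * (x * y)⁻¹ =
            (T (m:ℝ) * (T (k:ℝ) * y⁻¹) * (T (m:ℝ))⁻¹) * (T (m:ℝ) * x⁻¹) := by
          group
        rw [heq]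
        exact hmul _ (hconj _ _ hk) _ hm
    -- hence f is bounded above
    have hbdd : ∀ g : G, f g ≤ D - C₂ := by
      intro g
      obtain ⟨m, hm⟩ := hdom g
      have h1 : C₂ ≤ f (T m * g⁻¹) := hC₂ hm
      have h2 := hDle (T m) g⁻¹
      have h3 : f (T m) = 0 := by rw [hfTn, haz, mul_zero]
      have h4 := hinv g
      rw [h3, h4] at h2
      have := abs_le.1 h2
      linarith [this.1, this.2]
    -- but f is unbounded
    have : ∃ g : G, f g ≠ 0 := by
      by_contra hc
      push_neg at hc
      exact hf0 (funext hc)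
    obtain ⟨g, hg⟩ := this
    have hgpos : ∃ g' : G, 0 < f g' := by
      rcases lt_or_gt_of_ne hg with h | h
      · exact ⟨g⁻¹, by rw [hinv]; linarith⟩
      · exact ⟨g, h⟩
    obtain ⟨g', hg'⟩ := hgpos
    obtain ⟨n, hn⟩ := exists_nat_gt ((D - C₂) / f g')
    have h5 : f (g' ^ n) = n * f g' := by
      rw [← zpow_natCast, hhom]; push_cast; ring
    have h6 := hbdd (g' ^ n)
    rw [h5] at h6
    have h7 : (D - C₂) / f g' * f g' = D - C₂ := div_mul_cancel₀ _ (ne_of_gt hg')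
    nlinarith
  have hapos : 0 < a := lt_of_le_of_ne ha0 (Ne.symm hane)
  -- key lower bound
  have key : ∀ t : ℝ, 0 ≤ t → (⌊t⌋₊ : ℝ) * a + (min C₂ 0 - D) ≤ f (T t) := by
    intro t ht
    set n := ⌊t⌋₊ with hn
    have hfl : (n:ℝ) ≤ t := Nat.floor_le ht
    have hsplit : T t = T n * T (t - n) := by
      have := hTadd n (t - n) (by positivity) (by linarith)
      rw [← this]; ring_nf
    have h1 : min C₂ 0 ≤ f (T (t - n)) := by
      rcases eq_or_lt_of_le hfl with h | h
      · rw [← h]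
        simp only [sub_self, hT0, hf1]
        exact min_le_right _ _
      · exact le_trans (min_le_left _ _) (hC₂ (hTinP _ (by linarith)))
    have h2 := hDle (T n) (T (t - n))
    rw [← hsplit, hfTn] at h2
    have := abs_le.1 h2
    linarith [this.1]
  -- conclude
  have hlim : Filter.Tendsto (fun t : ℝ => (⌊t⌋₊ : ℝ) * a + (min C₂ 0 - D))
      Filter.atTop Filter.atTop := by
    apply Filter.Tendsto.atTop_add _ tendsto_const_nhds
    exact Filter.Tendsto.atTop_mul_const hapos
      (tendsto_natCast_atTop_atTop.comp tendsto_nat_floor_atTop)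
  apply Filter.tendsto_atTop_mono' _ _ hlim
  filter_upwards [Filter.eventually_ge_atTop (0:ℝ)] with t ht
  exact key t ht
end

section
/- Let G be a connected topological group and f a nonzero aperiodic continuous homogeneous quasimorphism on G. Suppose G⁺ is the order semigroup of a bi-invariant partial order on G sandwiched by f that is closed, has path-connected interior Int(G⁺) which is dense in G⁺, and admits a continuous one-parameter semigroup T : [0,∞) → G (T(0) = e, T(s+t) = T(s)T(t)) with T(t) ∈ Int(G⁺) for all t > 0. Then G⁺_max := {g ∈ G | f(gh) ≥ f(h) for all h ∈ G} also satisfies these properties: Int(G⁺_max) is path-connected and dense in G⁺_max, and there exists a continuous one-parameter semigroup whose values at all t > 0 lie in Int(G⁺_max). -/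
private lemma aux_nonneg (x K : ℝ) (h : ∀ n : ℕ, K ≤ ((n : ℝ) + 1) * x) : 0 ≤ x := by
  by_contra hx
  push_neg at hx
  obtain ⟨n, hn⟩ := exists_nat_gt ((1 - K) / (-x))
  have hx' : (0 : ℝ) < -x := by linarith
  have h2 : 1 - K < (n : ℝ) * (-x) := by
    rwa [div_lt_iff₀ hx'] at hn
  have h3 := h n
  nlinarith

private lemma aux_eq_zero (x C : ℝ) (h : ∀ n : ℕ, ((n : ℝ) + 1) * |x| ≤ C) : x = 0 := by
  by_contra hx
  have habs : 0 < |x| := abs_pos.mpr hx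
  obtain ⟨n, hn⟩ := exists_nat_gt (C / |x|)
  have h2 : C < (n : ℝ) * |x| := by rwa [div_lt_iff₀ habs] at hn
  have h3 := h n
  nlinarith

/-- If some closed order semigroup `G⁺` sandwiched by a nonzero aperiodic
continuous homogeneous quasimorphism `f` on a connected topological group has
path-connected interior dense in `G⁺` and contains a one-parameter semigroup
in its interior, then the maximal order semigroup
`G⁺_max = {g | ∀ h, f(gh) ≥ f(h)}` enjoys the same properties. -/
theorem max_inherits_dagger_dagger {G : Type*} [Group G] [TopologicalSpace G]
    [IsTopologicalGroup G] [ConnectedSpace G]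
    (f : G → ℝ) (hcont : Continuous f)
    (hD : ∃ D : ℝ, ∀ g h : G, |f (g * h) - f g - f h| ≤ D)
    (hhom : ∀ (g : G) (n : ℤ), f (g ^ n) = n * f g)
    (hf0 : f ≠ 0)
    (haper : ∀ H : Subgroup G, H.Normal → (∀ h ∈ H, f h = 0) → H = ⊥)
    (P : Set G)
    (hone : (1 : G) ∈ P)
    (hmul : ∀ a ∈ P, ∀ b ∈ P, a * b ∈ P)
    (hconj : ∀ g : G, ∀ a ∈ P, g * a * g⁻¹ ∈ P)
    (hpointed : ∀ a ∈ P, a⁻¹ ∈ P → a = 1)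
    (hsandwich : ∃ C₁ C₂ : ℝ, {g : G | C₁ ≤ f g} ⊆ P ∧ P ⊆ {g : G | C₂ ≤ f g})
    (hclosed : IsClosed P)
    (hpath : IsPathConnected (interior P))
    (hdense : P ⊆ closure (interior P))
    (T : ℝ → G) (hTcont : ContinuousOn T (Set.Ici 0)) (hT0 : T 0 = 1)
    (hTadd : ∀ s t : ℝ, 0 ≤ s → 0 ≤ t → T (s + t) = T s * T t)
    (hTint : ∀ t : ℝ, 0 < t → T t ∈ interior P) :
    IsPathConnected (interior {g : G | ∀ h : G, f h ≤ f (g * h)}) ∧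
    {g : G | ∀ h : G, f h ≤ f (g * h)} ⊆
      closure (interior {g : G | ∀ h : G, f h ≤ f (g * h)}) ∧
    ∃ T' : ℝ → G, ContinuousOn T' (Set.Ici 0) ∧ T' 0 = 1 ∧
      (∀ s t : ℝ, 0 ≤ s → 0 ≤ t → T' (s + t) = T' s * T' t) ∧
      ∀ t : ℝ, 0 < t → T' t ∈ interior {g : G | ∀ h : G, f h ≤ f (g * h)} := by
  classical
  obtain ⟨D, hD⟩ := hD
  obtain ⟨C₁, C₂, hC₁, hC₂⟩ := hsandwich
  set Q : Set G := {g : G | ∀ h : G, f h ≤ f (g * h)} with hQdef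
  -- basic facts about f
  have hf1 : f 1 = 0 := by simpa using hhom 1 0
  have hub : ∀ g h : G, f (g * h) ≤ f g + f h + D := by
    intro g h
    have := abs_le.mp (hD g h)
    linarith [this.2]
  have hlb : ∀ g h : G, f g + f h - D ≤ f (g * h) := by
    intro g h
    have := abs_le.mp (hD g h)
    linarith [this.1]
  have hfinv : ∀ g : G, f g⁻¹ = -f g := by
    intro g
    have := hhom g (-1)
    simpa using this
  have hfpow : ∀ (g : G) (n : ℕ), f (g ^ n) = n * f g := by
    intro g n
    have := hhom g (n : ℤ)
    rw [zpow_natCast] at this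
    exact_mod_cast this
  -- membership of P implies membership of Q
  have hPQ : P ⊆ Q := by
    intro g hg
    intro h
    have hdecomp : ∀ n : ℕ, ∃ c ∈ P, (g * h) ^ n = c * h ^ n := by
      intro n
      induction n with
      | zero => exact ⟨1, hone, by simp⟩
      | succ n ih =>
        obtain ⟨c, hc, hcn⟩ := ih
        refine ⟨c * (h ^ n * g * (h ^ n)⁻¹), hmul c hc _ (hconj (h ^ n) g hg), ?_⟩
        rw [pow_succ, hcn]
        group
    have key : ∀ n : ℕ, (C₂ - D) ≤ ((n : ℝ) + 1) * (f (g * h) - f h) := by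
      intro n
      obtain ⟨c, hc, hcn⟩ := hdecomp (n + 1)
      have h1 := hlb c (h ^ (n + 1))
      rw [← hcn] at h1
      have e1 : f ((g * h) ^ (n + 1)) = ((n : ℝ) + 1) * f (g * h) := by
        rw [hfpow]; push_cast; ring
      have e2 : f (h ^ (n + 1)) = ((n : ℝ) + 1) * f h := by
        rw [hfpow]; push_cast; ring
      have hc2 : C₂ ≤ f c := hC₂ hc
      rw [e1, e2] at h1
      nlinarith
    have := aux_nonneg _ _ key
    linarith
  -- positivity of f on the interior of P
  have hpos : ∀ g ∈ interior P, 0 < f g := by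
    intro g hg
    by_contra hle
    push_neg at hle
    set V : Set G := (fun x => g * x) ⁻¹' interior P ∩ (fun x => g * x⁻¹) ⁻¹' interior P
      with hVdef
    have hVo : IsOpen V :=
      (isOpen_interior.preimage (continuous_mul_left g)).inter
        (isOpen_interior.preimage ((continuous_mul_left g).comp continuous_inv))
    have h1V : (1 : G) ∈ V := by
      constructor <;> simpa using hg
    have htop : Subgroup.closure V = ⊤ := by
      have hopen : IsOpen ((Subgroup.closure V : Subgroup G) : Set G) :=
        Subgroup.isOpen_of_mem_nhds _
          (Filter.mem_of_superset (hVo.mem_nhds h1V) Subgroup.subset_closure)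
      have hclopen : IsClopen ((Subgroup.closure V : Subgroup G) : Set G) :=
        ⟨Subgroup.isClosed_of_isOpen _ hopen, hopen⟩
      have huniv : ((Subgroup.closure V : Subgroup G) : Set G) = Set.univ :=
        hclopen.eq_univ ⟨1, Subgroup.one_mem _⟩
      exact Subgroup.coe_eq_univ.mp huniv
    have hchain : ∀ x : G, ∃ k : ℕ, g ^ k * x⁻¹ ∈ P ∧ g ^ k * x ∈ P := by
      intro x
      have hx : x ∈ Subgroup.closure V := by rw [htop]; trivial
      induction hx using Subgroup.closure_induction with
      | mem y hy =>
        refine ⟨1, ?_, ?_⟩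
        · have := hy.2
          simpa using interior_subset this
        · have := hy.1
          simpa using interior_subset this
      | one => exact ⟨0, by simpa using hone, by simpa using hone⟩
      | mul y z hy hz ihy ihz =>
        obtain ⟨ky, hky1, hky2⟩ := ihy
        obtain ⟨kz, hkz1, hkz2⟩ := ihz
        refine ⟨ky + kz, ?_, ?_⟩
        · have hmem : (g ^ ky * (g ^ kz * z⁻¹) * (g ^ ky)⁻¹) * (g ^ ky * y⁻¹) ∈ P :=
            hmul _ (hconj (g ^ ky) _ hkz1) _ hky1
          have heq : (g ^ ky * (g ^ kz * z⁻¹) * (g ^ ky)⁻¹) * (g ^ ky * y⁻¹)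
              = g ^ (ky + kz) * (y * z)⁻¹ := by
            rw [pow_add]; group
          rwa [heq] at hmem
        · have hmem : (g ^ kz * (g ^ ky * y) * (g ^ kz)⁻¹) * (g ^ kz * z) ∈ P :=
            hmul _ (hconj (g ^ kz) _ hky2) _ hkz2
          have heq : (g ^ kz * (g ^ ky * y) * (g ^ kz)⁻¹) * (g ^ kz * z)
              = g ^ (ky + kz) * (y * z) := by
            rw [pow_add]; group
          rwa [heq] at hmem
      | inv y hy ihy =>
        obtain ⟨k, hk1, hk2⟩ := ihy
        exact ⟨k, by simpa using hk2, hk1⟩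
    -- find an element with large f-value
    obtain ⟨h₀, hh₀⟩ : ∃ h₀ : G, 0 < f h₀ := by
      by_contra hno
      push_neg at hno
      apply hf0
      funext x
      have h1 : f x ≤ 0 := hno x
      have h2 : f x⁻¹ ≤ 0 := hno x⁻¹
      rw [hfinv] at h2
      have : f x = 0 := le_antisymm h1 (by linarith)
      simpa using this
    obtain ⟨m, hm⟩ := exists_nat_gt ((D - C₂) / f h₀)
    have hfb : D - C₂ < f (h₀ ^ m) := by
      rw [hfpow]
      calc D - C₂ = ((D - C₂) / f h₀) * f h₀ := by field_simp
        _ < m * f h₀ := by exact mul_lt_mul_of_pos_right hm hh₀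
    obtain ⟨k, hk1, _⟩ := hchain (h₀ ^ m)
    have hc2 : C₂ ≤ f (g ^ k * (h₀ ^ m)⁻¹) := hC₂ hk1
    have hupper := hub (g ^ k) ((h₀ ^ m)⁻¹)
    rw [hfinv, hfpow] at hupper
    have hkg : (k : ℝ) * f g ≤ 0 := by
      have hk0 : (0 : ℝ) ≤ (k : ℝ) := Nat.cast_nonneg k
      nlinarith
    linarith
  -- Q is a submonoid
  have hQmul : ∀ a ∈ Q, ∀ b ∈ Q, a * b ∈ Q := by
    intro a ha b hb h
    have h1 : f h ≤ f (b * h) := hb h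
    have h2 : f (b * h) ≤ f (a * (b * h)) := ha (b * h)
    rw [← mul_assoc] at h2
    linarith
  -- interior facts
  have hQint : ∀ a ∈ Q, ∀ x ∈ interior Q, a * x ∈ interior Q := by
    intro a ha x hx
    have hsub : (a * ·) '' interior Q ⊆ Q := by
      rintro _ ⟨y, hy, rfl⟩
      exact hQmul a ha y (interior_subset hy)
    have hopen : IsOpen ((a * ·) '' interior Q) := isOpenMap_mul_left a _ isOpen_interior
    exact interior_maximal hsub hopen ⟨x, hx, rfl⟩
  have hPmulInt : ∀ x ∈ interior P, ∀ y ∈ P, x * y ∈ interior P := by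
    intro x hx y hy
    have hsub : (· * y) '' interior P ⊆ P := by
      rintro _ ⟨z, hz, rfl⟩
      exact hmul z (interior_subset hz) y hy
    have hopen : IsOpen ((· * y) '' interior P) := isOpenMap_mul_right y _ isOpen_interior
    exact interior_maximal hsub hopen ⟨x, hx, rfl⟩
  have hconjInt : ∀ x : G, ∀ y ∈ interior P, x * y * x⁻¹ ∈ interior P := by
    intro x y hy
    have hopenmap : IsOpenMap fun z : G => x * z * x⁻¹ :=
      (isOpenMap_mul_right x⁻¹).comp (isOpenMap_mul_left x)
    have hsub : (fun z : G => x * z * x⁻¹) '' interior P ⊆ P := by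
      rintro _ ⟨z, hz, rfl⟩
      exact hconj x z (interior_subset hz)
    exact interior_maximal hsub (hopenmap _ isOpen_interior) ⟨y, hy, rfl⟩
  have hPQint : interior P ⊆ interior Q := interior_mono hPQ
  -- values of T at natural numbers
  have hTn : ∀ n : ℕ, T (n : ℝ) = T 1 ^ n := by
    intro n
    induction n with
    | zero => simpa using hT0
    | succ n ih =>
      have h1 : T ((n : ℝ) + 1) = T (n : ℝ) * T 1 :=
        hTadd (n : ℝ) 1 (Nat.cast_nonneg n) zero_le_one
      have h2 : ((n : ℕ) + 1 : ℕ) = ((n : ℝ) + 1 : ℝ) := by exact_mod_cast rfl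
      rw [show (((n : ℕ) + 1 : ℕ) : ℝ) = (n : ℝ) + 1 by push_cast; ring, h1, ih, pow_succ]
  have hTpos : 0 < f (T 1) := hpos (T 1) (hTint 1 one_pos)
  -- absorption
  have habs : ∀ x : G, ∃ s : ℝ, 0 < s ∧ x * T s ∈ interior P := by
    intro x
    obtain ⟨n, hn⟩ := exists_nat_gt ((C₁ + D - f x) / f (T 1))
    have hfn : C₁ ≤ f (x * T (n : ℝ)) := by
      have h1 := hlb x (T (n : ℝ))
      have h2 : f (T (n : ℝ)) = (n : ℝ) * f (T 1) := by rw [hTn, hfpow]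
      have h3 : C₁ + D - f x < (n : ℝ) * f (T 1) := by
        calc C₁ + D - f x = ((C₁ + D - f x) / f (T 1)) * f (T 1) := by field_simp
          _ < (n : ℝ) * f (T 1) := mul_lt_mul_of_pos_right hn hTpos
      linarith
    have hPn : x * T (n : ℝ) ∈ P := hC₁ hfn
    refine ⟨1 + (n : ℝ), by positivity, ?_⟩
    have he : T (1 + (n : ℝ)) = T 1 * T (n : ℝ) :=
      hTadd 1 (n : ℝ) zero_le_one (Nat.cast_nonneg n)
    rw [he]
    have he2 : x * (T 1 * T (n : ℝ)) = (x * T 1 * x⁻¹) * (x * T (n : ℝ)) := by group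
    rw [he2]
    exact hPmulInt _ (hconjInt x _ (hTint 1 one_pos)) _ hPn
  -- joining along the one-parameter semigroup
  have joinT : ∀ a ∈ interior Q, ∀ s : ℝ, 0 < s → JoinedIn (interior Q) a (a * T s) := by
    intro a ha s hs
    have hγ : Continuous fun t : unitInterval => a * T (s * (t : ℝ)) := by
      have hst : Continuous fun t : unitInterval => s * (t : ℝ) :=
        continuous_const.mul continuous_subtype_val
      have hTc : Continuous fun t : unitInterval => T (s * (t : ℝ)) := by
        apply hTcont.comp_continuous hst
        intro t
        exact mul_nonneg hs.le t.2.1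
      exact continuous_const.mul hTc
    refine ⟨⟨⟨fun t => a * T (s * (t : ℝ)), hγ⟩, ?_, ?_⟩, ?_⟩
    · simp [hT0]
    · simp
    · intro t
      rcases t.2.1.lt_or_eq with ht | ht
      · have hst : 0 < s * (t : ℝ) := mul_pos hs ht
        exact hQint a (interior_subset ha) _ (hPQint (hTint _ hst))
      · simp only [Path.coe_mk_mk, ← ht, mul_zero, hT0, mul_one]
        exact ha
  -- joining via translation of paths in interior P
  have joinTrans : ∀ a ∈ Q, ∀ p ∈ interior P, ∀ q ∈ interior P,
      JoinedIn (interior Q) (a * p) (a * q) := by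
    intro a ha p hp q hq
    have hpq : JoinedIn (interior P) p q := hpath.joinedIn p hp q hq
    have himg : JoinedIn ((a * ·) '' interior P) (a * p) (a * q) :=
      hpq.map (continuous_mul_left a)
    refine himg.mono ?_
    rintro _ ⟨z, hz, rfl⟩
    exact hQint a ha _ (hPQint hz)
  have hTQ : T 1 ∈ interior Q := hPQint (hTint 1 one_pos)
  have hjoin : ∀ a ∈ interior Q, ∀ b ∈ interior Q, JoinedIn (interior Q) a b := by
    intro a ha b hb
    obtain ⟨s, hs, hsP⟩ := habs (b⁻¹ * a)
    have J1 : JoinedIn (interior Q) a (a * T s) := joinT a ha s hs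
    have J2 : JoinedIn (interior Q) b (b * T 1) := joinT b hb 1 one_pos
    have J3 : JoinedIn (interior Q) (b * T 1) (b * (b⁻¹ * a * T s)) := by
      have : b * (b⁻¹ * a * T s) = b * (b⁻¹ * a * T s) := rfl
      exact joinTrans b (interior_subset hb) (T 1) (hTint 1 one_pos) _ hsP
    have he : b * (b⁻¹ * a * T s) = a * T s := by group
    rw [he] at J3
    exact J1.trans (J2.trans J3).symm
  refine ⟨⟨T 1, hTQ, fun {y} hy => hjoin (T 1) hTQ y hy⟩, ?_, ?_⟩
  · -- density
    intro g hg
    rw [mem_closure_iff_nhds]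
    intro U hU
    have h1 : Filter.Tendsto T (nhdsWithin 0 (Set.Ici 0)) (nhds 1) := by
      have := hTcont 0 Set.self_mem_Ici
      rw [ContinuousWithinAt, hT0] at this
      exact this
    have htend : Filter.Tendsto (fun t => g * T t) (nhdsWithin 0 (Set.Ici 0)) (nhds g) := by
      have h2 := (continuous_mul_left g).continuousAt.tendsto.comp h1
      simpa [Function.comp_def] using h2
    have htend' : Filter.Tendsto (fun t => g * T t) (nhdsWithin 0 (Set.Ioi 0)) (nhds g) :=
      htend.mono_left (nhdsWithin_mono _ Set.Ioi_subset_Ici_self)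
    have hmem1 : (fun t => g * T t) ⁻¹' U ∈ nhdsWithin (0 : ℝ) (Set.Ioi 0) := htend' hU
    have hmem2 : Set.Ioi (0 : ℝ) ∈ nhdsWithin (0 : ℝ) (Set.Ioi 0) := self_mem_nhdsWithin
    obtain ⟨t, htU, ht0⟩ := Filter.nonempty_of_mem (Filter.inter_mem hmem1 hmem2)
    exact ⟨g * T t, htU, hQint g hg _ (hPQint (hTint t ht0))⟩
  · exact ⟨T, hTcont, hT0, hTadd, fun t ht => hPQint (hTint t ht)⟩
end

section
/- Let X be a topological space and A, B nonempty subsets of X. Assume that the interior of B is connected, that A equals the closure of its interior, that B equals the closure of its interior, and that A is strictly contained in B. Then the topological boundary of A meets the interior of B: ∂A ∩ Int(B) ≠ ∅. -/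
/-- Point-set topology lemma: if `A` and `B` are nonempty subsets of a
topological space `X` with `Int(B)` connected, `A = closure(Int A)`,
`B = closure(Int B)` and `A ⊊ B`, then `∂A ∩ Int(B) ≠ ∅`. -/
theorem frontier_meets_interior {X : Type*} [TopologicalSpace X]
    (A B : Set X) (hA : A.Nonempty) (hB : B.Nonempty)
    (hconn : IsConnected (interior B))
    (hAcl : A = closure (interior A))
    (hBcl : B = closure (interior B))
    (hAB : A ⊂ B) :
    (frontier A ∩ interior B).Nonempty := by
  have hAclosed : IsClosed A := hAcl ▸ isClosed_closure
  have hclA : closure A = A := hAclosed.closure_eq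
  -- interior A is nonempty
  have hIA : (interior A).Nonempty := by
    by_contra h
    rw [Set.not_nonempty_iff_eq_empty] at h
    rw [h, closure_empty] at hAcl
    exact hA.ne_empty hAcl
  have hsubIA : interior A ⊆ interior B := interior_mono hAB.le
  -- B not ⊆ A, so there is x ∈ interior B with x ∉ closure A
  have hnot : ¬ (interior B ⊆ closure A) := by
    intro h
    have : B ⊆ A := by
      rw [hBcl, ← hclA]
      exact closure_mono h |>.trans (by rw [hclA, hclA])
    exact hAB.not_subset this
  obtain ⟨x, hxB, hxA⟩ := Set.not_subset.mp hnot
  by_contra hcon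
  rw [Set.not_nonempty_iff_eq_empty] at hcon
  have hcover : interior B ⊆ interior A ∪ (closure A)ᶜ := by
    intro y hy
    by_cases h1 : y ∈ interior A
    · exact Or.inl h1
    · by_cases h2 : y ∈ closure A
      · exfalso
        have hmem : y ∈ frontier A ∩ interior B := ⟨⟨h2, h1⟩, hy⟩
        rw [hcon] at hmem
        exact hmem
      · exact Or.inr h2
  have := hconn.isPreconnected (interior A) (closure A)ᶜ isOpen_interior
    isClosed_closure.isOpen_compl hcover
    ⟨hIA.choose, hsubIA hIA.choose_spec, hIA.choose_spec⟩
    ⟨x, hxB, hxA⟩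
  obtain ⟨z, _, hz1, hz2⟩ := this
  exact hz2 (subset_closure (interior_subset hz1))
end
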